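/- arXiv:2104.10630 — 3 statements merged into one kernel-verified Lean document; each statement's English description precedes it below -/
import Mathlib

section
/- Let n ≥ 1, τ ∈ (0, n−2), and fix constants D₀, c > 0. On ℝⁿ (or any space with Euclidean volume growth), for every x and every t > 0, ∫ t^{−n/2} exp(−|x−y|²/(2D₀ t)) (1+|y|)^{−τ−2} dy ≤ C(n, τ, D₀) (1+|x|)^{−τ−2}, provided τ + 2 < n. -/
open Real MeasureTheory Set


lemma pow_le_exp_aux (n : ℕ) {u : ℝ} (hu : 0 ≤ u) :
    u ^ ((n : ℝ) / 2) ≤ (1 + (n:ℝ) ^ n) * rexp u := by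
  have hexp1 : (1:ℝ) ≤ rexp u := by
    rw [← Real.exp_zero]; exact Real.exp_le_exp.2 hu
  rcases le_total u 1 with h | h
  · have h1 : u ^ ((n:ℝ)/2) ≤ 1 := Real.rpow_le_one hu h (by positivity)
    nlinarith [pow_nonneg (by positivity : (0:ℝ) ≤ (n:ℝ)) n, Real.exp_pos u]
  · have h1 : u ^ ((n:ℝ)/2) ≤ u ^ (n:ℝ) :=
      Real.rpow_le_rpow_of_exponent_le h (by nlinarith [show (0:ℝ) ≤ (n:ℝ) by positivity])
    have h2 : u ^ (n:ℝ) = u ^ n := Real.rpow_natCast u n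
    have h3 : u ^ n ≤ (n:ℝ) ^ n * rexp u := by
      rcases Nat.eq_zero_or_pos n with h0 | h0
      · subst h0; simpa using hexp1
      · have hn0 : (0:ℝ) < n := by exact_mod_cast h0
        have hv : u / n ≤ rexp (u / n) := by
          have := Real.add_one_le_exp (u / n - 1)
          have h4 : rexp (u/n - 1) ≤ rexp (u/n) := Real.exp_le_exp.2 (by linarith)
          linarith
        have h5 : u ≤ (n:ℝ) * rexp (u / n) := by
          rw [← div_le_iff₀' hn0]; exact hv
        calc u ^ n ≤ ((n:ℝ) * rexp (u / n)) ^ n :=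
              pow_le_pow_left₀ (by linarith) h5 n
          _ = (n:ℝ) ^ n * (rexp (u/n)) ^ n := mul_pow _ _ n
          _ = (n:ℝ) ^ n * rexp u := by
              rw [← Real.exp_nat_mul, mul_div_cancel₀ _ (by exact_mod_cast hn0.ne' : (n:ℝ) ≠ 0)]
    nlinarith [Real.exp_pos u]

lemma kernel_sup (n : ℕ) {a t : ℝ} (ha : 0 < a) (ht : 0 < t) :
    t ^ (-(n:ℝ)/2) * rexp (-(a / t)) ≤ (1 + (n:ℝ)^n) * a ^ (-(n:ℝ)/2) := by
  set u := a / t with hu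
  have hu0 : 0 < u := div_pos ha ht
  have key : u ^ ((n:ℝ)/2) * rexp (-u) ≤ 1 + (n:ℝ)^n := by
    have h := mul_le_mul_of_nonneg_right (pow_le_exp_aux n hu0.le) (Real.exp_pos (-u)).le
    have h2 : rexp u * rexp (-u) = 1 := by rw [← Real.exp_add]; simp
    calc u ^ ((n:ℝ)/2) * rexp (-u) ≤ (1 + (n:ℝ)^n) * rexp u * rexp (-u) := by
          nlinarith [Real.exp_pos (-u)]
      _ = 1 + (n:ℝ)^n := by rw [mul_assoc, h2, mul_one]
  have ht_eq : t = a / u := by rw [hu, div_div_eq_mul_div, mul_div_cancel_left₀ t ha.ne']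
  have htr : t ^ (-(n:ℝ)/2) = a ^ (-(n:ℝ)/2) * u ^ ((n:ℝ)/2) := by
    rw [ht_eq, Real.div_rpow ha.le hu0.le, div_eq_mul_inv, ← Real.rpow_neg hu0.le]
    rw [show (-(-(n:ℝ)/2)) = (n:ℝ)/2 by ring]
  calc t ^ (-(n:ℝ)/2) * rexp (-(a/t)) = a ^ (-(n:ℝ)/2) * (u ^ ((n:ℝ)/2) * rexp (-u)) := by
        rw [htr]; ring
    _ ≤ a ^ (-(n:ℝ)/2) * (1 + (n:ℝ)^n) := by
        exact mul_le_mul_of_nonneg_left key (Real.rpow_nonneg ha.le _)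
    _ = (1 + (n:ℝ)^n) * a ^ (-(n:ℝ)/2) := by ring


lemma ball_int (n : ℕ) (hn : 1 ≤ n) {τ : ℝ} (hτ : 0 < τ) (hτn : τ + 2 < n) {R : ℝ} (hR : 0 < R) :
    ∫ y in Metric.ball (0 : EuclideanSpace ℝ (Fin n)) R, (1 + ‖y‖) ^ (-τ - 2) ≤
      ((n : ℝ) * (volume (Metric.ball (0 : EuclideanSpace ℝ (Fin n)) 1)).toReal /
        ((n:ℝ) - τ - 2)) * (1 + R) ^ ((n:ℝ) - τ - 2) := by
  have hd : (0:ℝ) < (n:ℝ) - τ - 2 := by linarith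
  haveI : Nontrivial (EuclideanSpace ℝ (Fin n)) :=
    Module.nontrivial_of_finrank_pos (R := ℝ) (by rw [finrank_euclideanSpace_fin]; omega)
  set f : ℝ → ℝ := Set.indicator (Iio R) (fun r => (1 + r) ^ (-τ - 2)) with hf
  have h1 : ∫ y in Metric.ball (0 : EuclideanSpace ℝ (Fin n)) R, (1 + ‖y‖) ^ (-τ - 2)
      = ∫ y : EuclideanSpace ℝ (Fin n), f ‖y‖ := by
    rw [← integral_indicator measurableSet_ball]
    congr 1
    funext y
    by_cases hy : ‖y‖ < R
    · rw [Set.indicator_of_mem (by simpa [mem_ball_zero_iff] using hy), hf,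
        Set.indicator_of_mem (by simpa using hy)]
    · rw [Set.indicator_of_notMem (by simpa [mem_ball_zero_iff] using hy), hf,
        Set.indicator_of_notMem (by simpa using hy)]
  rw [h1, MeasureTheory.integral_fun_norm_addHaar volume f, finrank_euclideanSpace_fin,
    nsmul_eq_mul, smul_eq_mul]
  have h2 : ∫ r in Ioi (0:ℝ), r ^ (n - 1) • f r
      = ∫ r in Ioo (0:ℝ) R, r ^ (n-1) * (1 + r) ^ (-τ - 2) := by
    have : ∀ r : ℝ, r ^ (n-1) • f r
        = Set.indicator (Iio R) (fun r => r ^ (n-1) * (1 + r) ^ (-τ - 2)) r := by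
      intro r
      by_cases hr : r ∈ Iio R
      · rw [hf, Set.indicator_of_mem hr, Set.indicator_of_mem hr, smul_eq_mul]
      · rw [hf, Set.indicator_of_notMem hr, Set.indicator_of_notMem hr, smul_zero]
    simp_rw [this]
    rw [setIntegral_indicator measurableSet_Iio, Set.Ioi_inter_Iio]
  rw [h2]
  have hc1 : ContinuousOn (fun r : ℝ => r ^ (n-1) * (1 + r) ^ (-τ - 2)) (Icc 0 R) := by
    apply ContinuousOn.mul (continuous_pow (n-1)).continuousOn
    apply ContinuousOn.rpow_const (by fun_prop : Continuous fun r : ℝ => 1 + r).continuousOn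
    intro r hr
    exact Or.inl (by simp at hr; intro h; nlinarith [hr.1])
  have hc2 : ContinuousOn (fun r : ℝ => (1 + r) ^ ((n:ℝ) - τ - 3)) (Icc 0 R) := by
    apply ContinuousOn.rpow_const (by fun_prop : Continuous fun r : ℝ => 1 + r).continuousOn
    intro r hr
    exact Or.inl (by simp at hr; intro h; nlinarith [hr.1])
  have hint1 : IntegrableOn (fun r : ℝ => r ^ (n-1) * (1 + r) ^ (-τ-2)) (Ioo 0 R) :=
    (hc1.integrableOn_compact isCompact_Icc).mono_set Ioo_subset_Icc_self
  have hint2 : IntegrableOn (fun r : ℝ => (1 + r) ^ ((n:ℝ) - τ - 3)) (Ioo 0 R) :=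
    (hc2.integrableOn_compact isCompact_Icc).mono_set Ioo_subset_Icc_self
  have hmono : ∫ r in Ioo (0:ℝ) R, r ^ (n-1) * (1+r)^(-τ-2)
      ≤ ∫ r in Ioo (0:ℝ) R, (1+r)^((n:ℝ)-τ-3) := by
    apply setIntegral_mono_on hint1 hint2 measurableSet_Ioo
    intro r hr
    have hr0 : 0 ≤ r := hr.1.le
    have h1r : (0:ℝ) < 1 + r := by linarith
    have e1 : r ^ (n-1) ≤ (1+r) ^ (n-1) := pow_le_pow_left₀ hr0 (by linarith) _
    have e2 : ((1:ℝ)+r) ^ (n-1) * (1+r)^(-τ-2) = (1+r)^((n:ℝ)-τ-3) := by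
      rw [← Real.rpow_natCast (1+r) (n-1), ← Real.rpow_add h1r]
      congr 1
      rw [Nat.cast_sub hn]
      push_cast; ring
    calc r ^ (n-1) * (1+r)^(-τ-2) ≤ (1+r)^(n-1) * (1+r)^(-τ-2) :=
          mul_le_mul_of_nonneg_right e1 (Real.rpow_nonneg h1r.le _)
      _ = (1+r)^((n:ℝ)-τ-3) := e2
  have hval : ∫ r in Ioo (0:ℝ) R, (1+r)^((n:ℝ)-τ-3) ≤ (1+R)^((n:ℝ)-τ-2) / ((n:ℝ)-τ-2) := by
    have h3 : ∫ r in Ioo (0:ℝ) R, (1+r)^((n:ℝ)-τ-3)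
        = ∫ r in (0:ℝ)..R, (1+r)^((n:ℝ)-τ-3) := by
      rw [intervalIntegral.integral_of_le hR.le, integral_Ioc_eq_integral_Ioo]
    rw [h3]
    have h4 := intervalIntegral.integral_comp_add_left (a := (0:ℝ)) (b := R)
      (fun s => s ^ ((n:ℝ)-τ-3)) 1
    rw [h4, integral_rpow (Or.inl (by linarith : (-1:ℝ) < (n:ℝ)-τ-3)),
      show (n:ℝ)-τ-3+1 = (n:ℝ)-τ-2 by ring]
    norm_num
    exact (div_le_div_iff_of_pos_right hd).2 (by linarith)
  have hIle : ∫ r in Ioo (0:ℝ) R, r ^ (n-1) * (1+r)^(-τ-2)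
      ≤ (1+R)^((n:ℝ)-τ-2)/((n:ℝ)-τ-2) := hmono.trans hval
  calc (n:ℝ) * ((volume (Metric.ball (0 : EuclideanSpace ℝ (Fin n)) 1)).toReal
        * ∫ r in Ioo (0:ℝ) R, r ^ (n-1) * (1+r)^(-τ-2))
      ≤ (n:ℝ) * ((volume (Metric.ball (0 : EuclideanSpace ℝ (Fin n)) 1)).toReal
        * ((1+R)^((n:ℝ)-τ-2)/((n:ℝ)-τ-2))) := by
        apply mul_le_mul_of_nonneg_left
          (mul_le_mul_of_nonneg_left hIle ENNReal.toReal_nonneg) (by positivity)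
    _ = ((n:ℝ) * (volume (Metric.ball (0 : EuclideanSpace ℝ (Fin n)) 1)).toReal
        / ((n:ℝ)-τ-2)) * (1+R)^((n:ℝ)-τ-2) := by ring


lemma gaussInt (n : ℕ) {b : ℝ} (hb : 0 < b) :
    ∫ v : EuclideanSpace ℝ (Fin n), rexp (-(b * ‖v‖ ^ 2)) = (π / b) ^ ((n : ℝ) / 2) := by
  have := GaussianFourier.integral_rexp_neg_mul_sq_norm (V := EuclideanSpace ℝ (Fin n)) hb
  rw [finrank_euclideanSpace_fin] at this
  simpa [neg_mul] using this

lemma gaussIntegrable (n : ℕ) {b : ℝ} (hb : 0 < b) :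
    Integrable (fun v : EuclideanSpace ℝ (Fin n) => rexp (-(b * ‖v‖ ^ 2))) := by
  have h := (GaussianFourier.integrable_cexp_neg_mul_sq_norm_add (V := EuclideanSpace ℝ (Fin n))
    (b := (b : ℂ)) (by simpa using hb) 0 0).norm
  have heq : (fun v : EuclideanSpace ℝ (Fin n) =>
      ‖Complex.exp (-(b:ℂ) * (‖v‖:ℂ) ^ 2 + 0 * (inner ℝ (0 : EuclideanSpace ℝ (Fin n)) v : ℝ))‖)
      = fun v => rexp (-(b * ‖v‖ ^ 2)) := by
    funext v
    rw [Complex.norm_exp]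
    norm_num
    left
    norm_cast
  rwa [heq] at h

lemma weight_far {τ R r : ℝ} (hτ : 0 < τ) (hR : 0 ≤ R) (hr2 : R/2 ≤ r) (hr0 : 0 ≤ r) :
    (1 + r) ^ (-τ - 2) ≤ 2 ^ (τ + 2) * (1 + R) ^ (-τ - 2) := by
  have h1 : (0:ℝ) < 1 + r := by linarith
  have h2 : (0:ℝ) < 1 + R := by linarith
  rw [show (-τ - 2 : ℝ) = -(τ+2) by ring, Real.rpow_neg h1.le, Real.rpow_neg h2.le]
  have h3 : (1+R) ^ (τ+2) ≤ 2 ^ (τ+2) * (1+r) ^ (τ+2) := by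
    rw [← Real.mul_rpow (by norm_num) h1.le]
    exact Real.rpow_le_rpow h2.le (by linarith) (by linarith)
  have hp1 : 0 < (1+r) ^ (τ+2) := Real.rpow_pos_of_pos h1 _
  have hp2 : 0 < (1+R) ^ (τ+2) := Real.rpow_pos_of_pos h2 _
  rw [inv_le_iff_one_le_mul₀ hp1]
  calc (1:ℝ) = (1+R)^(τ+2) * ((1+R)^(τ+2))⁻¹ := (mul_inv_cancel₀ hp2.ne').symm
    _ ≤ (2 ^ (τ+2) * (1+r) ^ (τ+2)) * ((1+R)^(τ+2))⁻¹ :=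
        mul_le_mul_of_nonneg_right h3 (inv_nonneg.2 hp2.le)
    _ = 2 ^ (τ + 2) * ((1+R) ^ (τ+2))⁻¹ * (1 + r) ^ (τ+2) := by ring

set_option maxHeartbeats 2000000 in
theorem stmt8 (n : ℕ) (hn : 1 ≤ n) (τ D₀ : ℝ) (hτ : 0 < τ) (hτn : τ + 2 < n)
    (hD : 0 < D₀) :
    ∃ C > 0, ∀ (x : EuclideanSpace ℝ (Fin n)) (t : ℝ), 0 < t →
      (∫ y : EuclideanSpace ℝ (Fin n),
          t ^ (-(n:ℝ)/2) * Real.exp (-‖x - y‖^2 / (2 * D₀ * t)) * (1 + ‖y‖) ^ (-τ - 2))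
        ≤ C * (1 + ‖x‖) ^ (-τ - 2) := by
  have hd : (0:ℝ) < (n:ℝ) - τ - 2 := by linarith
  set Vol : ℝ := (volume (Metric.ball (0 : EuclideanSpace ℝ (Fin n)) 1)).toReal with hVol
  have hVol0 : 0 ≤ Vol := ENNReal.toReal_nonneg
  set K₁ : ℝ := (2 * π * D₀) ^ ((n:ℝ)/2) with hK₁
  have hK₁0 : 0 < K₁ := Real.rpow_pos_of_pos (by positivity) _
  set K₂ : ℝ := (1 + (n:ℝ)^n) * (8*D₀)^((n:ℝ)/2) * ((n:ℝ) * Vol / ((n:ℝ) - τ - 2))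
      * (2:ℝ)^((n:ℝ)) with hK₂
  have hK₂0 : 0 ≤ K₂ := by positivity
  refine ⟨2^(τ+2) * K₁ + K₂, by positivity, ?_⟩
  intro x t ht
  set R := ‖x‖ with hR
  have hR0 : 0 ≤ R := norm_nonneg x
  have h1R : (0:ℝ) < 1 + R := by linarith
  set b : ℝ := (2*D₀*t)⁻¹ with hb
  have hb0 : 0 < b := by positivity
  have hrw : ∀ y : EuclideanSpace ℝ (Fin n),
      t ^ (-(n:ℝ)/2) * Real.exp (-‖x - y‖^2 / (2 * D₀ * t)) * (1 + ‖y‖) ^ (-τ - 2)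
      = t ^ (-(n:ℝ)/2) * rexp (-(b * ‖x - y‖^2)) * (1 + ‖y‖) ^ (-τ - 2) := by
    intro y
    rw [hb, show -‖x - y‖^2 / (2*D₀*t) = -((2*D₀*t)⁻¹ * ‖x - y‖^2) by ring]
  simp_rw [hrw]
  -- gaussian facts
  have hgint : Integrable (fun y : EuclideanSpace ℝ (Fin n) => rexp (-(b * ‖x - y‖^2))) :=
    (gaussIntegrable n hb0).comp_sub_left x
  have hgval : ∫ y : EuclideanSpace ℝ (Fin n), rexp (-(b*‖x-y‖^2)) = (π/b)^((n:ℝ)/2) := by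
    rw [show (fun y : EuclideanSpace ℝ (Fin n) => rexp (-(b*‖x-y‖^2)))
      = fun y => (fun v : EuclideanSpace ℝ (Fin n) => rexp (-(b*‖v‖^2))) (x - y) from rfl,
      integral_sub_left_eq_self (fun v : EuclideanSpace ℝ (Fin n) => rexp (-(b*‖v‖^2))) volume x,
      gaussInt n hb0]
  have hK1val : t ^ (-(n:ℝ)/2) * (π/b)^((n:ℝ)/2) = K₁ := by
    rw [hb, show π / (2*D₀*t)⁻¹ = (2*π*D₀) * t by field_simp,
      Real.mul_rpow (by positivity) ht.le, hK₁]
    calc t ^ (-(n:ℝ)/2) * ((2*π*D₀) ^ ((n:ℝ)/2) * t ^ ((n:ℝ)/2))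
        = (2*π*D₀) ^ ((n:ℝ)/2) * (t ^ (-(n:ℝ)/2) * t ^ ((n:ℝ)/2)) := by ring
      _ = (2*π*D₀) ^ ((n:ℝ)/2) := by
          rw [← Real.rpow_add ht, show (-(n:ℝ)/2 + (n:ℝ)/2) = 0 by ring, Real.rpow_zero, mul_one]
  -- weight facts
  have hw0 : ∀ y : EuclideanSpace ℝ (Fin n), 0 < (1+‖y‖) ^ (-τ-2) := fun y =>
    Real.rpow_pos_of_pos (by positivity) _
  have hwle1 : ∀ y : EuclideanSpace ℝ (Fin n), (1+‖y‖) ^ (-τ-2) ≤ 1 := fun y =>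
    Real.rpow_le_one_of_one_le_of_nonpos (by simpa using norm_nonneg y) (by linarith)
  have hwcont : Continuous (fun y : EuclideanSpace ℝ (Fin n) => (1 + ‖y‖) ^ (-τ-2)) := by
    apply Continuous.rpow_const (continuous_const.add continuous_norm)
    intro y; left; show (1:ℝ) + ‖y‖ ≠ 0; positivity
  have hcont : Continuous (fun y : EuclideanSpace ℝ (Fin n) =>
      t ^ (-(n:ℝ)/2) * rexp (-(b*‖x-y‖^2)) * (1+‖y‖) ^ (-τ-2)) := by
    apply Continuous.mul _ hwcont
    apply Continuous.mul continuous_const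
    exact Real.continuous_exp.comp (by fun_prop)
  have hIg : Integrable (fun y : EuclideanSpace ℝ (Fin n) =>
      t ^ (-(n:ℝ)/2) * rexp (-(b*‖x-y‖^2)) * (1+‖y‖) ^ (-τ-2)) := by
    refine Integrable.mono (hgint.const_mul (t ^ (-(n:ℝ)/2)))
      hcont.aestronglyMeasurable (Filter.Eventually.of_forall fun y => ?_)
    rw [Real.norm_eq_abs, abs_of_nonneg (by positivity), Real.norm_eq_abs,
      abs_of_nonneg (by positivity)]
    exact mul_le_of_le_one_right (by positivity) (hwle1 y)
  have hgausstot : ∫ y : EuclideanSpace ℝ (Fin n), t ^ (-(n:ℝ)/2) * rexp (-(b*‖x-y‖^2)) = K₁ := by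
    rw [integral_const_mul, hgval, hK1val]
  rcases le_or_gt R 1 with hRs | hRb
  · -- small ‖x‖ : compare with full gaussian integral
    have h1 : (∫ y : EuclideanSpace ℝ (Fin n),
        t ^ (-(n:ℝ)/2) * rexp (-(b*‖x-y‖^2)) * (1+‖y‖) ^ (-τ-2))
        ≤ ∫ y : EuclideanSpace ℝ (Fin n), t ^ (-(n:ℝ)/2) * rexp (-(b*‖x-y‖^2)) :=
      integral_mono hIg (hgint.const_mul _)
        (fun y => mul_le_of_le_one_right (by positivity) (hwle1 y))
    have hsmall : (1:ℝ) ≤ 2^(τ+2) * (1+R)^(-τ-2) := by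
      have h3 : ((1:ℝ)+R)^(τ+2) ≤ 2^(τ+2) :=
        Real.rpow_le_rpow (by linarith) (by linarith) (by linarith)
      have hp : (0:ℝ) < (1+R)^(τ+2) := Real.rpow_pos_of_pos h1R _
      rw [show (-τ-2:ℝ) = -(τ+2) by ring, Real.rpow_neg h1R.le]
      calc (1:ℝ) = (1+R)^(τ+2) * ((1+R)^(τ+2))⁻¹ := (mul_inv_cancel₀ hp.ne').symm
        _ ≤ 2^(τ+2) * ((1+R)^(τ+2))⁻¹ :=
            mul_le_mul_of_nonneg_right h3 (inv_nonneg.2 hp.le)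
    have hw : 0 < (1+R)^(-τ-2) := Real.rpow_pos_of_pos h1R _
    calc (∫ y : EuclideanSpace ℝ (Fin n),
        t ^ (-(n:ℝ)/2) * rexp (-(b*‖x-y‖^2)) * (1+‖y‖) ^ (-τ-2))
        ≤ K₁ := by rw [← hgausstot]; exact h1
      _ = K₁ * 1 := (mul_one _).symm
      _ ≤ K₁ * (2^(τ+2) * (1+R)^(-τ-2)) := mul_le_mul_of_nonneg_left hsmall hK₁0.le
      _ ≤ (2^(τ+2) * K₁ + K₂) * (1+R)^(-τ-2) := by nlinarith
  · -- large ‖x‖ : split at radius R/2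
    have hR2 : (0:ℝ) < R/2 := by linarith
    have hsplit := integral_add_compl (μ := volume)
      (measurableSet_ball (x := (0 : EuclideanSpace ℝ (Fin n))) (ε := R/2)) hIg
    rw [← hsplit]
    set s := Metric.ball (0 : EuclideanSpace ℝ (Fin n)) (R/2) with hs
    -- outer estimate
    have houter : (∫ y in sᶜ, t ^ (-(n:ℝ)/2) * rexp (-(b*‖x-y‖^2)) * (1+‖y‖) ^ (-τ-2))
        ≤ 2^(τ+2) * (1+R)^(-τ-2) * K₁ := by
      have hptw : ∀ y ∈ sᶜ, t ^ (-(n:ℝ)/2) * rexp (-(b*‖x-y‖^2)) * (1+‖y‖) ^ (-τ-2)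
          ≤ (2^(τ+2) * (1+R)^(-τ-2)) * (t ^ (-(n:ℝ)/2) * rexp (-(b*‖x-y‖^2))) := by
        intro y hy
        have hy' : R/2 ≤ ‖y‖ := by
          simp only [hs, Set.mem_compl_iff, Metric.mem_ball, dist_zero_right, not_lt] at hy
          exact hy
        have hwf : (1+‖y‖) ^ (-τ-2) ≤ 2^(τ+2) * (1+R)^(-τ-2) :=
          weight_far hτ hR0 hy' (norm_nonneg y)
        calc t ^ (-(n:ℝ)/2) * rexp (-(b*‖x-y‖^2)) * (1+‖y‖) ^ (-τ-2)
            ≤ t ^ (-(n:ℝ)/2) * rexp (-(b*‖x-y‖^2)) * (2^(τ+2) * (1+R)^(-τ-2)) :=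
              mul_le_mul_of_nonneg_left hwf (by positivity)
          _ = (2^(τ+2) * (1+R)^(-τ-2)) * (t ^ (-(n:ℝ)/2) * rexp (-(b*‖x-y‖^2))) := by ring
      have h1 : (∫ y in sᶜ, t ^ (-(n:ℝ)/2) * rexp (-(b*‖x-y‖^2)) * (1+‖y‖) ^ (-τ-2))
          ≤ ∫ y in sᶜ, (2^(τ+2) * (1+R)^(-τ-2)) * (t ^ (-(n:ℝ)/2) * rexp (-(b*‖x-y‖^2))) :=
        setIntegral_mono_on hIg.integrableOn
          (((hgint.const_mul _).const_mul _)).integrableOn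
          measurableSet_ball.compl hptw
      have h2 : (∫ y in sᶜ, (2^(τ+2) * (1+R)^(-τ-2)) * (t ^ (-(n:ℝ)/2) * rexp (-(b*‖x-y‖^2))))
          ≤ ∫ y : EuclideanSpace ℝ (Fin n),
            (2^(τ+2) * (1+R)^(-τ-2)) * (t ^ (-(n:ℝ)/2) * rexp (-(b*‖x-y‖^2))) :=
        setIntegral_le_integral ((hgint.const_mul _).const_mul _)
          (Filter.Eventually.of_forall fun y => by positivity)
      have h3 : (∫ y : EuclideanSpace ℝ (Fin n),
          (2^(τ+2) * (1+R)^(-τ-2)) * (t ^ (-(n:ℝ)/2) * rexp (-(b*‖x-y‖^2))))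
          = 2^(τ+2) * (1+R)^(-τ-2) * K₁ := by
        rw [integral_const_mul, hgausstot]
      linarith
    -- inner estimate
    have hinner : (∫ y in s, t ^ (-(n:ℝ)/2) * rexp (-(b*‖x-y‖^2)) * (1+‖y‖) ^ (-τ-2))
        ≤ K₂ * (1+R)^(-τ-2) := by
      have hRpos : (0:ℝ) < R := by linarith
      have h8 : (0:ℝ) < 8*D₀ := by linarith
      set a : ℝ := R^2/(8*D₀) with ha
      have ha0 : 0 < a := div_pos (pow_pos hRpos 2) h8
      have hba : ∀ y ∈ s, t ^ (-(n:ℝ)/2) * rexp (-(b*‖x-y‖^2)) * (1+‖y‖)^(-τ-2)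
          ≤ (t ^ (-(n:ℝ)/2) * rexp (-(a/t))) * (1+‖y‖)^(-τ-2) := by
        intro y hy
        have hy' : ‖y‖ < R/2 := by simpa [hs, mem_ball_zero_iff] using hy
        have hxy : R/2 ≤ ‖x - y‖ := by
          have h := norm_sub_norm_le x y
          linarith
        have hsq : (R/2)^2 ≤ ‖x-y‖^2 := by nlinarith [norm_nonneg (x - y)]
        have hba2 : b * (R/2)^2 = a/t := by rw [hb, ha]; field_simp; ring
        have harg : a/t ≤ b*‖x-y‖^2 := by nlinarith
        have hexp : rexp (-(b*‖x-y‖^2)) ≤ rexp (-(a/t)) := Real.exp_le_exp.2 (by linarith)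
        exact mul_le_mul_of_nonneg_right
          (mul_le_mul_of_nonneg_left hexp (by positivity)) (hw0 y).le
      have hwInt : IntegrableOn (fun y : EuclideanSpace ℝ (Fin n) => (1+‖y‖)^(-τ-2)) s :=
        (hwcont.continuousOn.integrableOn_compact
          (isCompact_closedBall (0 : EuclideanSpace ℝ (Fin n)) (R/2))).mono_set
          Metric.ball_subset_closedBall
      have h1 : (∫ y in s, t ^ (-(n:ℝ)/2) * rexp (-(b*‖x-y‖^2)) * (1+‖y‖)^(-τ-2))
          ≤ ∫ y in s, (t ^ (-(n:ℝ)/2) * rexp (-(a/t))) * (1+‖y‖)^(-τ-2) :=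
        setIntegral_mono_on hIg.integrableOn (hwInt.const_mul _) measurableSet_ball hba
      have h2 : (∫ y in s, (t ^ (-(n:ℝ)/2) * rexp (-(a/t))) * (1+‖y‖)^(-τ-2))
          = (t ^ (-(n:ℝ)/2) * rexp (-(a/t))) * ∫ y in s, (1+‖y‖)^(-τ-2) :=
        integral_const_mul _ _
      have hker := kernel_sup n ha0 ht
      have hballint := ball_int n hn hτ hτn hR2
      have hballint2 : (∫ y in s, (1+‖y‖)^(-τ-2))
          ≤ ((n:ℝ)*Vol/((n:ℝ)-τ-2)) * (1+R)^((n:ℝ)-τ-2) := by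
        refine hballint.trans ?_
        refine mul_le_mul_of_nonneg_left ?_ (by positivity)
        exact Real.rpow_le_rpow (by linarith) (by linarith) (by linarith)
      have hbnn : 0 ≤ ∫ y in s, (1+‖y‖)^(-τ-2) :=
        setIntegral_nonneg measurableSet_ball (fun y _ => (hw0 y).le)
      have hkernn : 0 ≤ t ^ (-(n:ℝ)/2) * rexp (-(a/t)) := by positivity
      have hcomb : (t ^ (-(n:ℝ)/2) * rexp (-(a/t))) * ∫ y in s, (1+‖y‖)^(-τ-2)
          ≤ ((1+(n:ℝ)^n) * a^(-(n:ℝ)/2)) * (((n:ℝ)*Vol/((n:ℝ)-τ-2)) * (1+R)^((n:ℝ)-τ-2)) :=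
        mul_le_mul hker hballint2 hbnn (by positivity)
      have haval : a ^ (-(n:ℝ)/2) = (8*D₀)^((n:ℝ)/2) * R ^ (-(n:ℝ)) := by
        have e1 : a ^ (-(n:ℝ)/2) = (R^2) ^ (-(n:ℝ)/2) / (8*D₀) ^ (-(n:ℝ)/2) := by
          rw [ha, Real.div_rpow (sq_nonneg R) h8.le]
        have e2 : ((R:ℝ)^2) ^ (-(n:ℝ)/2) = R ^ (-(n:ℝ)) := by
          rw [← Real.rpow_natCast R 2, ← Real.rpow_mul hRpos.le]
          congr 1
          push_cast
          ring
        have e3 : ((8:ℝ)*D₀) ^ (-(n:ℝ)/2) = ((8*D₀) ^ ((n:ℝ)/2))⁻¹ := by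
          rw [neg_div, Real.rpow_neg h8.le]
        rw [e1, e2, e3, div_eq_mul_inv, inv_inv]
        ring
      have hpow : R ^ (-(n:ℝ)) * (1+R)^((n:ℝ)-τ-2) ≤ (2:ℝ)^((n:ℝ)) * (1+R)^(-τ-2) := by
        have e4 : ((1:ℝ)+R)^((n:ℝ)-τ-2) = (1+R)^((n:ℝ)) * (1+R)^(-τ-2) := by
          rw [← Real.rpow_add h1R]
          congr 1
          ring
        have e5 : R ^ (-(n:ℝ)) * (1+R)^((n:ℝ)) = ((1+R)/R) ^ ((n:ℝ)) := by
          rw [Real.div_rpow (by linarith) hRpos.le, Real.rpow_neg hRpos.le]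
          ring
        have e6 : (((1:ℝ)+R)/R) ^ ((n:ℝ)) ≤ (2:ℝ)^((n:ℝ)) :=
          Real.rpow_le_rpow (by positivity) (by rw [div_le_iff₀ hRpos]; linarith) (by positivity)
        calc R ^ (-(n:ℝ)) * (1+R)^((n:ℝ)-τ-2)
            = (R ^ (-(n:ℝ)) * (1+R)^((n:ℝ))) * (1+R)^(-τ-2) := by rw [e4]; ring
          _ ≤ (2:ℝ)^((n:ℝ)) * (1+R)^(-τ-2) := by
              rw [e5]
              exact mul_le_mul_of_nonneg_right e6 (Real.rpow_nonneg h1R.le _)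
      calc (∫ y in s, t ^ (-(n:ℝ)/2) * rexp (-(b*‖x-y‖^2)) * (1+‖y‖)^(-τ-2))
          ≤ ((1+(n:ℝ)^n) * a^(-(n:ℝ)/2)) * (((n:ℝ)*Vol/((n:ℝ)-τ-2)) * (1+R)^((n:ℝ)-τ-2)) :=
            h1.trans (h2.trans_le hcomb)
        _ = ((1+(n:ℝ)^n) * (8*D₀)^((n:ℝ)/2) * ((n:ℝ)*Vol/((n:ℝ)-τ-2)))
            * (R^(-(n:ℝ)) * (1+R)^((n:ℝ)-τ-2)) := by rw [haval]; ring
        _ ≤ ((1+(n:ℝ)^n) * (8*D₀)^((n:ℝ)/2) * ((n:ℝ)*Vol/((n:ℝ)-τ-2)))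
            * ((2:ℝ)^((n:ℝ)) * (1+R)^(-τ-2)) :=
            mul_le_mul_of_nonneg_left hpow (by positivity)
        _ = K₂ * (1+R)^(-τ-2) := by rw [hK₂]; ring
    have hw : 0 < (1+R)^(-τ-2) := Real.rpow_pos_of_pos h1R _
    calc (∫ y in s, t ^ (-(n:ℝ)/2) * rexp (-(b*‖x-y‖^2)) * (1+‖y‖) ^ (-τ-2))
          + (∫ y in sᶜ, t ^ (-(n:ℝ)/2) * rexp (-(b*‖x-y‖^2)) * (1+‖y‖) ^ (-τ-2))
        ≤ K₂ * (1+R)^(-τ-2) + 2^(τ+2) * (1+R)^(-τ-2) * K₁ := by linarith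
      _ = (2^(τ+2) * K₁ + K₂) * (1+R)^(-τ-2) := by ring
end

section
/- Let n ≥ 3 and τ ∈ (0, n−2). On ℝⁿ, for every x ≠ 0, ∫_{ℝⁿ} |x−y|^{−n+2} (1+|y|)^{−τ−2} dy ≤ C(n,τ) (1+|x|)^{−τ}. -/
open Real MeasureTheory Set Metric Module Filter
open scoped ENNReal NNReal Topology

noncomputable section

namespace Stmt9

variable {n : ℕ}

lemma radial (hn : 1 ≤ n) (f : ℝ → ℝ) :
    ∫ y : EuclideanSpace ℝ (Fin n), f ‖y‖
      = (n : ℝ) * (volume (ball (0 : EuclideanSpace ℝ (Fin n)) 1)).toReal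
        * ∫ r in Ioi (0:ℝ), r ^ (n-1) * f r := by
  haveI : Nontrivial (EuclideanSpace ℝ (Fin n)) :=
    nontrivial_of_finrank_pos (R := ℝ) (by rw [finrank_euclideanSpace_fin]; omega)
  rw [MeasureTheory.integral_fun_norm_addHaar volume f]
  simp [finrank_euclideanSpace_fin, nsmul_eq_mul, smul_eq_mul, mul_assoc]
  exact Or.inl (Or.inl rfl)

lemma integrableOn_rpow_norm (hn : 1 ≤ n) {e : ℝ} (he : -(n:ℝ) < e) (he0 : e < 0) (T : ℝ) :
    IntegrableOn (fun z : EuclideanSpace ℝ (Fin n) => ‖z‖ ^ e)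
      (closedBall (0 : EuclideanSpace ℝ (Fin n)) T) := by
  set E := EuclideanSpace ℝ (Fin n)
  set μ' := volume.restrict (closedBall (0 : E) T) with hμ'
  have hmeas : Measurable fun z : E => ‖z‖ ^ e := by fun_prop
  have hnn : ∀ z : E, 0 ≤ ‖z‖ ^ e := fun z => rpow_nonneg (norm_nonneg _) _
  refine ⟨hmeas.aestronglyMeasurable, ?_⟩
  have hnorm : (∫⁻ z, ‖‖z‖ ^ e‖ₑ ∂μ') = ∫⁻ z, ENNReal.ofReal (‖z‖ ^ e) ∂μ' :=
    lintegral_enorm_of_nonneg hnn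
  rw [HasFiniteIntegral, hnorm,
    lintegral_eq_lintegral_meas_le μ' (Eventually.of_forall hnn) hmeas.aemeasurable]
  have hsub : ∀ t : ℝ, 0 < t → {z : E | t ≤ ‖z‖ ^ e} ⊆ closedBall (0:E) (t ^ e⁻¹) := by
    intro t ht z hz
    simp only [mem_setOf_eq] at hz
    have hz0 : 0 < ‖z‖ := by
      rcases eq_or_lt_of_le (norm_nonneg z) with h | h
      · exfalso
        rw [← h, Real.zero_rpow he0.ne] at hz
        linarith
      · exact h
    have h1 : (‖z‖ ^ e) ^ e⁻¹ ≤ t ^ e⁻¹ :=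
      Real.rpow_le_rpow_of_nonpos ht hz (inv_nonpos.mpr he0.le)
    rw [← Real.rpow_mul (norm_nonneg z), mul_inv_cancel₀ (ne_of_lt he0), Real.rpow_one] at h1
    simpa [mem_closedBall_zero_iff] using h1
  calc ∫⁻ t in Ioi (0:ℝ), μ' {a : E | t ≤ ‖a‖ ^ e}
      ≤ (∫⁻ t in Ioc (0:ℝ) 1, μ' {a : E | t ≤ ‖a‖ ^ e})
        + ∫⁻ t in Ioi (1:ℝ), μ' {a : E | t ≤ ‖a‖ ^ e} :=
        le_trans (lintegral_mono_set Ioi_subset_Ioc_union_Ioi) (lintegral_union_le _ _ _)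
    _ < ∞ := by
        refine ENNReal.add_lt_top.2 ⟨?_, ?_⟩
        · calc (∫⁻ t in Ioc (0:ℝ) 1, μ' {a : E | t ≤ ‖a‖ ^ e})
              ≤ ∫⁻ _ in Ioc (0:ℝ) 1, volume (closedBall (0:E) T) := by
                refine lintegral_mono fun t => ?_
                refine le_trans (measure_mono (subset_univ _)) ?_
                rw [Measure.restrict_apply_univ]
            _ < ∞ := by
                rw [lintegral_const]
                exact ENNReal.mul_lt_top measure_closedBall_lt_top
                  (by simp [Real.volume_Ioc])
        · calc (∫⁻ t in Ioi (1:ℝ), μ' {a : E | t ≤ ‖a‖ ^ e})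
              ≤ ∫⁻ t in Ioi (1:ℝ),
                  ENNReal.ofReal (t ^ (e⁻¹ * (n:ℝ))) * volume (ball (0:E) 1) := by
                refine setLIntegral_mono' measurableSet_Ioi fun t ht => ?_
                have ht0 : (0:ℝ) < t := lt_trans zero_lt_one ht
                have : μ' {a : E | t ≤ ‖a‖ ^ e} ≤ volume (closedBall (0:E) (t ^ e⁻¹)) :=
                  le_trans (Measure.restrict_apply_le _ _) (measure_mono (hsub t ht0))
                refine this.trans (le_of_eq ?_)
                rw [Measure.addHaar_closedBall volume (0:E) (rpow_nonneg ht0.le _),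
                  finrank_euclideanSpace_fin, ← Real.rpow_natCast (t ^ e⁻¹) n,
                  ← Real.rpow_mul ht0.le]
            _ < ∞ := by
                rw [lintegral_mul_const' _ _ measure_ball_lt_top.ne]
                refine ENNReal.mul_lt_top ?_ measure_ball_lt_top
                refine IntegrableOn.setLIntegral_lt_top ?_
                refine integrableOn_Ioi_rpow_of_lt ?_ zero_lt_one
                rw [← div_eq_inv_mul]
                rw [div_lt_iff_of_neg he0]
                linarith

lemma radial_Iic (f : ℝ → ℝ) (S : ℝ) :
    ∫ r in Ioi (0:ℝ), r ^ (n-1) * (Iic S).indicator f r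
      = ∫ r in Ioc (0:ℝ) S, r ^ (n-1) * f r := by
  have h : ∀ r : ℝ, r ^ (n-1) * (Iic S).indicator f r
      = (Iic S).indicator (fun r => r ^ (n-1) * f r) r := fun r => by
    by_cases hm : r ∈ Iic S <;> simp [Set.indicator_of_mem, Set.indicator_of_notMem, hm]
  simp_rw [h]
  rw [integral_indicator measurableSet_Iic, Measure.restrict_restrict measurableSet_Iic,
    Set.Iic_inter_Ioi]

lemma radial_Ioi (f : ℝ → ℝ) {S : ℝ} (hS : 0 ≤ S) :
    ∫ r in Ioi (0:ℝ), r ^ (n-1) * (Ioi S).indicator f r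
      = ∫ r in Ioi S, r ^ (n-1) * f r := by
  have h : ∀ r : ℝ, r ^ (n-1) * (Ioi S).indicator f r
      = (Ioi S).indicator (fun r => r ^ (n-1) * f r) r := fun r => by
    by_cases hm : r ∈ Ioi S <;> simp [Set.indicator_of_mem, Set.indicator_of_notMem, hm]
  simp_rw [h]
  rw [integral_indicator measurableSet_Ioi, Measure.restrict_restrict measurableSet_Ioi,
    Set.Ioi_inter_Ioi, sup_eq_left.mpr hS]

lemma oneD1 (hn : 3 ≤ n) {τ : ℝ} (hτ : 0 < τ) (hτn : τ < (n:ℝ) - 2) {S : ℝ} (hS : 0 ≤ S) :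
    ∫ r in Ioc (0:ℝ) S, r ^ (n-1) * (1+r) ^ (-τ-2)
      ≤ (1+S) ^ ((n:ℝ)-2-τ) / ((n:ℝ)-2-τ) := by
  have hn3 : (3:ℝ) ≤ (n:ℝ) := by exact_mod_cast hn
  have hn1 : ((n-1 : ℕ) : ℝ) = (n:ℝ) - 1 := by
    rw [Nat.cast_sub (by omega)]; norm_num
  have hc1 : ContinuousOn (fun r : ℝ => r ^ (n-1) * (1+r) ^ (-τ-2)) (Icc 0 S) := by
    refine ((continuous_pow _).continuousOn).mul ?_
    refine ContinuousOn.rpow_const (by fun_prop) fun r hr => Or.inl ?_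
    have := hr.1
    intro h; linarith
  have hc2 : ContinuousOn (fun r : ℝ => (1+r) ^ ((n:ℝ)-3-τ)) (Icc 0 S) := by
    refine ContinuousOn.rpow_const (by fun_prop) fun r hr => Or.inl ?_
    have := hr.1
    intro h; linarith
  calc ∫ r in Ioc (0:ℝ) S, r ^ (n-1) * (1+r) ^ (-τ-2)
      ≤ ∫ r in Ioc (0:ℝ) S, (1+r) ^ ((n:ℝ)-3-τ) := by
        refine setIntegral_mono_on
          ((hc1.integrableOn_compact isCompact_Icc).mono_set Ioc_subset_Icc_self)
          ((hc2.integrableOn_compact isCompact_Icc).mono_set Ioc_subset_Icc_self)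
          measurableSet_Ioc fun r hr => ?_
        have hr0 : 0 < r := hr.1
        have hp : (0:ℝ) < 1 + r := by linarith
        have h1 : r ^ (n-1) ≤ (1+r) ^ ((n:ℝ)-1) := by
          rw [← Real.rpow_natCast r (n-1), hn1]
          exact Real.rpow_le_rpow hr0.le (by linarith) (by linarith)
        calc r ^ (n-1) * (1+r) ^ (-τ-2)
            ≤ (1+r) ^ ((n:ℝ)-1) * (1+r) ^ (-τ-2) :=
              mul_le_mul_of_nonneg_right h1 (rpow_nonneg hp.le _)
          _ = (1+r) ^ ((n:ℝ)-3-τ) := by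
              rw [← Real.rpow_add hp, show (n:ℝ)-1+(-τ-2) = (n:ℝ)-3-τ by ring]
    _ ≤ (1+S) ^ ((n:ℝ)-2-τ) / ((n:ℝ)-2-τ) := by
        rw [← intervalIntegral.integral_of_le hS,
          intervalIntegral.integral_comp_add_left (fun u => u ^ ((n:ℝ)-3-τ)) 1,
          integral_rpow (Or.inl (by linarith))]
        rw [show (n:ℝ)-3-τ+1 = (n:ℝ)-2-τ by ring,
          show ((1:ℝ)+0) ^ ((n:ℝ)-2-τ) = 1 by norm_num]
        have hpos : (0:ℝ) < (n:ℝ)-2-τ := by linarith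
        gcongr
        linarith

lemma oneD2 (hn : 3 ≤ n) {T : ℝ} (hT : 0 ≤ T) :
    ∫ r in Ioc (0:ℝ) T, r ^ (n-1) * r ^ (-(n:ℝ)+2) = T^2/2 := by
  have hn1 : ((n-1 : ℕ) : ℝ) = (n:ℝ) - 1 := by
    rw [Nat.cast_sub (by omega)]; norm_num
  rw [setIntegral_congr_fun measurableSet_Ioc (g := fun r : ℝ => r) ?_]
  · rw [← intervalIntegral.integral_of_le hT, integral_id]
    ring
  · intro r hr
    have hr0 : 0 < r := hr.1
    show r ^ (n-1) * r ^ (-(n:ℝ)+2) = r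
    rw [← Real.rpow_natCast r (n-1), hn1, ← Real.rpow_add hr0,
      show (n:ℝ)-1+(-(n:ℝ)+2) = 1 by ring, Real.rpow_one]

lemma oneD3 (hn : 3 ≤ n) {τ : ℝ} (hτ : 0 < τ) {S : ℝ} (hS : 0 < S) :
    ∫ r in Ioi S, r ^ (n-1) * (1+r) ^ ((-(n:ℝ)+2)-τ-2) ≤ S ^ (-τ) / τ := by
  have hn1 : ((n-1 : ℕ) : ℝ) = (n:ℝ) - 1 := by
    rw [Nat.cast_sub (by omega)]; norm_num
  have key : ∫ r in Ioi S, r ^ (-1-τ) = S ^ (-τ) / τ := by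
    rw [integral_Ioi_rpow_of_lt (by linarith) hS,
      show (-1-τ+1 : ℝ) = -τ by ring, neg_div_neg_eq]
  rw [← key]
  refine integral_mono_of_nonneg ?_ ((integrableOn_Ioi_rpow_of_lt (by linarith) hS)) ?_
  · refine (ae_restrict_iff' measurableSet_Ioi).2 (ae_of_all _ fun r hr => ?_)
    have hr0 : 0 < r := hS.trans hr
    positivity
  · refine (ae_restrict_iff' measurableSet_Ioi).2 (ae_of_all _ fun r hr => ?_)
    have hr0 : 0 < r := hS.trans hr
    have hp : (0:ℝ) < 1 + r := by linarith
    have hn3 : (3:ℝ) ≤ (n:ℝ) := by exact_mod_cast hn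
    calc r ^ (n-1) * (1+r) ^ ((-(n:ℝ)+2)-τ-2)
        ≤ (1+r) ^ ((n:ℝ)-1) * (1+r) ^ ((-(n:ℝ)+2)-τ-2) := by
          refine mul_le_mul_of_nonneg_right ?_ (rpow_nonneg hp.le _)
          rw [← Real.rpow_natCast r (n-1), hn1]
          exact Real.rpow_le_rpow hr0.le (by linarith) (by linarith)
      _ = (1+r) ^ (-1-τ) := by
          rw [← Real.rpow_add hp, show (n:ℝ)-1+((-(n:ℝ)+2)-τ-2) = -1-τ by ring]
      _ ≤ r ^ (-1-τ) :=
          Real.rpow_le_rpow_of_nonpos hr0 (by linarith) (by linarith)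

lemma small (hn : 3 ≤ n) {τ : ℝ} (hτ : 0 < τ) (hτn : τ < (n:ℝ) - 2) :
    ∃ C, 0 ≤ C ∧ ∀ x : EuclideanSpace ℝ (Fin n), ‖x‖ ≤ 1 →
      (∫ y : EuclideanSpace ℝ (Fin n), ‖x - y‖ ^ (-(n:ℝ) + 2) * (1 + ‖y‖) ^ (-τ - 2))
        ≤ C * (1 + ‖x‖) ^ (-τ) := by
  classical
  have hn3 : (3:ℝ) ≤ (n:ℝ) := by exact_mod_cast hn
  have he0 : (-(n:ℝ)+2) < 0 := by linarith
  have hen : -(n:ℝ) < -(n:ℝ)+2 := by linarith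
  set c : ℝ := (volume (ball (0:EuclideanSpace ℝ (Fin n)) 1)).toReal with hc
  have hc0 : 0 ≤ c := ENNReal.toReal_nonneg
  have hMint : Integrable (fun y : EuclideanSpace ℝ (Fin n) => (1+‖y‖) ^ (-((n:ℝ)+τ))) :=
    integrable_one_add_norm (by rw [finrank_euclideanSpace_fin]; linarith)
  set M : ℝ := ∫ y : EuclideanSpace ℝ (Fin n), (1+‖y‖) ^ (-((n:ℝ)+τ)) with hMdef
  have hM0 : 0 ≤ M := integral_nonneg fun y => rpow_nonneg (by positivity) _
  have hexp : ((-(n:ℝ)+2)-τ-2 : ℝ) = -((n:ℝ)+τ) := by ring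
  have hK0 : (0:ℝ) ≤ (n:ℝ)*c*(9/2) + (3:ℝ)^((n:ℝ)-2) * M := by
    have h1 : (0:ℝ) ≤ (n:ℝ)*c*(9/2) :=
      mul_nonneg (mul_nonneg (Nat.cast_nonneg n) hc0) (by norm_num)
    have h2 : (0:ℝ) ≤ (3:ℝ)^((n:ℝ)-2) * M := mul_nonneg (rpow_nonneg (by norm_num) _) hM0
    linarith
  refine ⟨((n:ℝ)*c*(9/2) + (3:ℝ)^((n:ℝ)-2) * M) * 2^τ,
    mul_nonneg hK0 (rpow_nonneg (by norm_num) _), fun x hx => ?_⟩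
  set k1 : ℝ → ℝ := (Iic (3:ℝ)).indicator fun r => r ^ (-(n:ℝ)+2) with hk1
  set g2 : EuclideanSpace ℝ (Fin n) → ℝ :=
    fun y => (3:ℝ)^((n:ℝ)-2) * (1+‖y‖) ^ (-((n:ℝ)+τ)) with hg2def
  have hk1nn : ∀ t : ℝ, 0 ≤ t → 0 ≤ k1 t := fun t ht => by
    rw [hk1]
    by_cases h : t ∈ Iic (3:ℝ)
    · rw [Set.indicator_of_mem h]; exact rpow_nonneg ht _
    · rw [Set.indicator_of_notMem h]
  have hg1z : Integrable (fun z : EuclideanSpace ℝ (Fin n) => k1 ‖z‖) := by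
    have heq : (fun z : EuclideanSpace ℝ (Fin n) => k1 ‖z‖)
        = (closedBall (0:EuclideanSpace ℝ (Fin n)) 3).indicator
            (fun z => ‖z‖ ^ (-(n:ℝ)+2)) := by
      funext z
      by_cases h : ‖z‖ ≤ 3 <;>
        simp [hk1, Set.indicator_of_mem, Set.indicator_of_notMem, mem_closedBall_zero_iff,
          h, Set.mem_Iic]
    rw [heq]
    exact (integrable_indicator_iff measurableSet_closedBall).2
      (integrableOn_rpow_norm (by omega) hen he0 3)
  have hg1 : Integrable (fun y : EuclideanSpace ℝ (Fin n) => k1 ‖y - x‖) :=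
    hg1z.comp_sub_right x
  have hg2 : Integrable g2 := by
    rw [hg2def]
    exact hMint.const_mul _
  have hg2nn : ∀ y : EuclideanSpace ℝ (Fin n), (0:ℝ) ≤ g2 y := fun y => by
    rw [hg2def]
    exact mul_nonneg (rpow_nonneg (by norm_num) _) (rpow_nonneg (by positivity) _)
  have hpoint : ∀ y : EuclideanSpace ℝ (Fin n),
      ‖x - y‖ ^ (-(n:ℝ)+2) * (1+‖y‖) ^ (-τ-2) ≤ k1 ‖y - x‖ + g2 y := by
    intro y
    by_cases hcase : ‖y - x‖ ≤ 3
    · have h1 : k1 ‖y - x‖ = ‖x - y‖ ^ (-(n:ℝ)+2) := by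
        rw [hk1, Set.indicator_of_mem (show ‖y - x‖ ∈ Iic (3:ℝ) from hcase), norm_sub_rev y x]
      have hF : ‖x - y‖ ^ (-(n:ℝ)+2) * (1+‖y‖) ^ (-τ-2) ≤ ‖x - y‖ ^ (-(n:ℝ)+2) * 1 := by
        refine mul_le_mul_of_nonneg_left ?_ (rpow_nonneg (norm_nonneg _) _)
        exact Real.rpow_le_one_of_one_le_of_nonpos (by linarith [norm_nonneg y]) (by linarith)
      rw [mul_one] at hF
      linarith [hg2nn y]
    · push_neg at hcase
      have hy2 : (2:ℝ) ≤ ‖y‖ := by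
        have := norm_sub_le y x
        linarith
      have hxy : (1+‖y‖)/3 ≤ ‖x - y‖ := by
        rw [norm_sub_rev x y]
        have := norm_sub_norm_le y x
        linarith
    -- kernel bound
      have hker : ‖x - y‖ ^ (-(n:ℝ)+2) ≤ ((1+‖y‖)/3) ^ (-(n:ℝ)+2) :=
        Real.rpow_le_rpow_of_nonpos (by positivity) hxy he0.le
      have hsplit : ((1+‖y‖)/3) ^ (-(n:ℝ)+2)
          = (3:ℝ)^((n:ℝ)-2) * (1+‖y‖) ^ (-(n:ℝ)+2) := by
        rw [Real.div_rpow (by positivity) (by norm_num), div_eq_mul_inv,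
          ← Real.rpow_neg (by norm_num : (0:ℝ) ≤ 3), show -(-(n:ℝ)+2) = (n:ℝ)-2 by ring,
          mul_comm]
      have hFg2 : ‖x - y‖ ^ (-(n:ℝ)+2) * (1+‖y‖) ^ (-τ-2) ≤ g2 y := by
        calc ‖x - y‖ ^ (-(n:ℝ)+2) * (1+‖y‖) ^ (-τ-2)
            ≤ ((1+‖y‖)/3) ^ (-(n:ℝ)+2) * (1+‖y‖) ^ (-τ-2) :=
              mul_le_mul_of_nonneg_right hker (rpow_nonneg (by positivity) _)
          _ = (3:ℝ)^((n:ℝ)-2) * ((1+‖y‖) ^ (-(n:ℝ)+2) * (1+‖y‖) ^ (-τ-2)) := by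
              rw [hsplit]; ring
          _ = g2 y := by
              rw [hg2def, ← Real.rpow_add (by positivity : (0:ℝ) < 1+‖y‖),
                show (-(n:ℝ)+2) + (-τ-2) = -((n:ℝ)+τ) by ring]
      linarith [hk1nn ‖y - x‖ (norm_nonneg _)]
  calc (∫ y : EuclideanSpace ℝ (Fin n), ‖x - y‖ ^ (-(n:ℝ)+2) * (1+‖y‖) ^ (-τ-2))
      ≤ ∫ y : EuclideanSpace ℝ (Fin n), (k1 ‖y - x‖ + g2 y) :=
        integral_mono_of_nonneg
          (ae_of_all _ fun y => mul_nonneg (rpow_nonneg (norm_nonneg _) _)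
            (rpow_nonneg (by positivity) _))
          (hg1.add hg2) (ae_of_all _ hpoint)
    _ = (∫ y : EuclideanSpace ℝ (Fin n), k1 ‖y - x‖) + ∫ y, g2 y :=
        integral_add hg1 hg2
    _ = (∫ z : EuclideanSpace ℝ (Fin n), k1 ‖z‖) + (3:ℝ)^((n:ℝ)-2) * M := by
        rw [integral_sub_right_eq_self (fun z : EuclideanSpace ℝ (Fin n) => k1 ‖z‖) x]
        congr 1
        rw [hg2def, hMdef]
        exact integral_const_mul _ _
    _ = (n:ℝ) * c * (∫ r in Ioc (0:ℝ) 3, r ^ (n-1) * r ^ (-(n:ℝ)+2))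
          + (3:ℝ)^((n:ℝ)-2) * M := by
        rw [radial (by omega) k1, hk1, radial_Iic]
    _ = (n:ℝ) * c * (9/2) + (3:ℝ)^((n:ℝ)-2) * M := by
        rw [oneD2 hn (by norm_num : (0:ℝ) ≤ 3)]
        norm_num
    _ ≤ ((n:ℝ)*c*(9/2) + (3:ℝ)^((n:ℝ)-2) * M) * 2^τ * (1 + ‖x‖) ^ (-τ) := by
        have h2x : (2:ℝ)^(-τ) ≤ (1 + ‖x‖) ^ (-τ) :=
          Real.rpow_le_rpow_of_nonpos (by positivity) (by linarith) (by linarith)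
        have h21 : (2:ℝ)^τ * (2:ℝ)^(-τ) = 1 := by
          rw [← Real.rpow_add (by norm_num : (0:ℝ) < 2)]
          norm_num
        calc (n:ℝ)*c*(9/2) + (3:ℝ)^((n:ℝ)-2) * M
            = ((n:ℝ)*c*(9/2) + (3:ℝ)^((n:ℝ)-2) * M) * ((2:ℝ)^τ * (2:ℝ)^(-τ)) := by
              rw [h21, mul_one]
          _ ≤ ((n:ℝ)*c*(9/2) + (3:ℝ)^((n:ℝ)-2) * M) * ((2:ℝ)^τ * (1 + ‖x‖) ^ (-τ)) := by
              refine mul_le_mul_of_nonneg_left ?_ hK0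
              exact mul_le_mul_of_nonneg_left h2x (rpow_nonneg (by norm_num) _)
          _ = ((n:ℝ)*c*(9/2) + (3:ℝ)^((n:ℝ)-2) * M) * 2^τ * (1 + ‖x‖) ^ (-τ) := by
              ring

lemma large (hn : 3 ≤ n) {τ : ℝ} (hτ : 0 < τ) (hτn : τ < (n:ℝ) - 2) :
    ∃ C, 0 ≤ C ∧ ∀ x : EuclideanSpace ℝ (Fin n), 1 ≤ ‖x‖ →
      (∫ y : EuclideanSpace ℝ (Fin n), ‖x - y‖ ^ (-(n:ℝ) + 2) * (1 + ‖y‖) ^ (-τ - 2))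
        ≤ C * (1 + ‖x‖) ^ (-τ) := by
  classical
  have hn3 : (3:ℝ) ≤ (n:ℝ) := by exact_mod_cast hn
  have he0 : (-(n:ℝ)+2) < 0 := by linarith
  have hen : -(n:ℝ) < -(n:ℝ)+2 := by linarith
  set c : ℝ := (volume (ball (0:EuclideanSpace ℝ (Fin n)) 1)).toReal with hc
  have hc0 : 0 ≤ c := ENNReal.toReal_nonneg
  have hnc0 : (0:ℝ) ≤ (n:ℝ) * c := mul_nonneg (Nat.cast_nonneg n) hc0
  have hMint : Integrable (fun y : EuclideanSpace ℝ (Fin n) => (1+‖y‖) ^ (-((n:ℝ)+τ))) :=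
    integrable_one_add_norm (by rw [finrank_euclideanSpace_fin]; linarith)
  have hexp : ((-(n:ℝ)+2)-τ-2 : ℝ) = -((n:ℝ)+τ) := by ring
  have hD : (0:ℝ) < (n:ℝ)-2-τ := by linarith
  refine ⟨(n:ℝ)*c*((4:ℝ)^((n:ℝ)-2)/((n:ℝ)-2-τ)) + (n:ℝ)*c*((2:ℝ)^(τ+2)*(9/2))
      + (n:ℝ)*c*((4:ℝ)^((n:ℝ)-2)/τ), ?_, fun x hx => ?_⟩
  · have h4 : (0:ℝ) ≤ (4:ℝ)^((n:ℝ)-2) := rpow_nonneg (by norm_num) _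
    have h2 : (0:ℝ) ≤ (2:ℝ)^(τ+2) := rpow_nonneg (by norm_num) _
    have := hnc0
    positivity
  set R : ℝ := ‖x‖ with hRdef
  have hR1 : (1:ℝ) ≤ R := hx
  have hR0 : (0:ℝ) < R := by linarith
  have h1R : (0:ℝ) < 1 + R := by linarith
  set k1 : ℝ → ℝ :=
    (Iic (R/2)).indicator (fun r => (R/2) ^ (-(n:ℝ)+2) * (1+r) ^ (-τ-2)) with hk1
  set k2 : ℝ → ℝ :=
    (Iic (3*R)).indicator (fun r => (2:ℝ)^(τ+2) * (1+R) ^ (-τ-2) * r ^ (-(n:ℝ)+2)) with hk2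
  set k3 : ℝ → ℝ :=
    (Ioi (2*R)).indicator (fun r => (4:ℝ)^((n:ℝ)-2) * (1+r) ^ ((-(n:ℝ)+2)-τ-2)) with hk3
  -- nonnegativity at nonneg arguments
  have hk1nn : ∀ t : ℝ, 0 ≤ t → 0 ≤ k1 t := fun t ht => by
    rw [hk1]
    by_cases h : t ∈ Iic (R/2)
    · rw [Set.indicator_of_mem h]
      exact mul_nonneg (rpow_nonneg (by linarith) _) (rpow_nonneg (by linarith) _)
    · rw [Set.indicator_of_notMem h]
  have hk2nn : ∀ t : ℝ, 0 ≤ t → 0 ≤ k2 t := fun t ht => by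
    rw [hk2]
    by_cases h : t ∈ Iic (3*R)
    · rw [Set.indicator_of_mem h]
      exact mul_nonneg (mul_nonneg (rpow_nonneg (by norm_num) _)
        (rpow_nonneg (by linarith) _)) (rpow_nonneg ht _)
    · rw [Set.indicator_of_notMem h]
  have hk3nn : ∀ t : ℝ, 0 ≤ t → 0 ≤ k3 t := fun t ht => by
    rw [hk3]
    by_cases h : t ∈ Ioi (2*R)
    · rw [Set.indicator_of_mem h]
      exact mul_nonneg (rpow_nonneg (by norm_num) _) (rpow_nonneg (by linarith) _)
    · rw [Set.indicator_of_notMem h]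
  -- integrability
  have hg1 : Integrable (fun y : EuclideanSpace ℝ (Fin n) => k1 ‖y‖) := by
    have heq : (fun y : EuclideanSpace ℝ (Fin n) => k1 ‖y‖)
        = (closedBall (0:EuclideanSpace ℝ (Fin n)) (R/2)).indicator
            (fun y => (R/2) ^ (-(n:ℝ)+2) * (1+‖y‖) ^ (-τ-2)) := by
      funext y
      by_cases h : ‖y‖ ≤ R/2 <;>
        simp [hk1, Set.indicator_of_mem, Set.indicator_of_notMem, mem_closedBall_zero_iff,
          h, Set.mem_Iic]
    rw [heq]
    refine (integrable_indicator_iff measurableSet_closedBall).2 ?_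
    refine ContinuousOn.integrableOn_compact (isCompact_closedBall _ _) ?_
    refine (continuousOn_const.mul ?_)
    refine ContinuousOn.rpow_const ?_ fun y _ => Or.inl (by positivity)
    fun_prop
  have hg2z : Integrable (fun z : EuclideanSpace ℝ (Fin n) => k2 ‖z‖) := by
    have heq : (fun z : EuclideanSpace ℝ (Fin n) => k2 ‖z‖)
        = (closedBall (0:EuclideanSpace ℝ (Fin n)) (3*R)).indicator
            (fun z => (2:ℝ)^(τ+2) * (1+R) ^ (-τ-2) * ‖z‖ ^ (-(n:ℝ)+2)) := by
      funext z
      by_cases h : ‖z‖ ≤ 3*R <;>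
        simp [hk2, Set.indicator_of_mem, Set.indicator_of_notMem, mem_closedBall_zero_iff,
          h, Set.mem_Iic]
    rw [heq]
    exact (integrable_indicator_iff measurableSet_closedBall).2
      ((integrableOn_rpow_norm (by omega) hen he0 (3*R)).const_mul _)
  have hg2 : Integrable (fun y : EuclideanSpace ℝ (Fin n) => k2 ‖y - x‖) :=
    hg2z.comp_sub_right x
  have hg3 : Integrable (fun y : EuclideanSpace ℝ (Fin n) => k3 ‖y‖) := by
    have heq : (fun y : EuclideanSpace ℝ (Fin n) => k3 ‖y‖)
        = ((closedBall (0:EuclideanSpace ℝ (Fin n)) (2*R))ᶜ).indicator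
            (fun y => (4:ℝ)^((n:ℝ)-2) * (1+‖y‖) ^ ((-(n:ℝ)+2)-τ-2)) := by
      funext y
      by_cases h : 2*R < ‖y‖
      · rw [hk3, Set.indicator_of_mem (show ‖y‖ ∈ Ioi (2*R) from h),
          Set.indicator_of_mem (show y ∈ (closedBall (0:EuclideanSpace ℝ (Fin n)) (2*R))ᶜ
            from by simp only [mem_compl_iff, mem_closedBall_zero_iff, not_le]; linarith)]
      · rw [hk3, Set.indicator_of_notMem (show ‖y‖ ∉ Ioi (2*R) from h),
          Set.indicator_of_notMem
            (show y ∉ (closedBall (0:EuclideanSpace ℝ (Fin n)) (2*R))ᶜ from by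
              simp only [mem_compl_iff, mem_closedBall_zero_iff, not_le, not_lt] at h ⊢
              simpa using h)]
    rw [heq]
    refine Integrable.indicator ?_ measurableSet_closedBall.compl
    rw [show (fun y : EuclideanSpace ℝ (Fin n) =>
        (4:ℝ)^((n:ℝ)-2) * (1+‖y‖) ^ ((-(n:ℝ)+2)-τ-2))
      = fun y : EuclideanSpace ℝ (Fin n) =>
        (4:ℝ)^((n:ℝ)-2) * (1+‖y‖) ^ (-((n:ℝ)+τ)) from by rw [hexp]]
    exact hMint.const_mul _
  -- pointwise bound
  have hpoint : ∀ y : EuclideanSpace ℝ (Fin n),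
      ‖x - y‖ ^ (-(n:ℝ)+2) * (1+‖y‖) ^ (-τ-2) ≤ k1 ‖y‖ + k2 ‖y - x‖ + k3 ‖y‖ := by
    intro y
    have hyn : (0:ℝ) ≤ ‖y‖ := norm_nonneg y
    have h1y : (0:ℝ) < 1 + ‖y‖ := by linarith
    have hw : (0:ℝ) ≤ (1+‖y‖) ^ (-τ-2) := rpow_nonneg h1y.le _
    rcases le_or_gt ‖y‖ (R/2) with h1 | h1
    · have hv : k1 ‖y‖ = (R/2) ^ (-(n:ℝ)+2) * (1+‖y‖) ^ (-τ-2) := by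
        rw [hk1, Set.indicator_of_mem (show ‖y‖ ∈ Iic (R/2) from h1)]
      have hRx : R/2 ≤ ‖x - y‖ := by
        have := norm_sub_norm_le x y
        rw [← hRdef] at this
        linarith
      have hker : ‖x - y‖ ^ (-(n:ℝ)+2) ≤ (R/2) ^ (-(n:ℝ)+2) :=
        Real.rpow_le_rpow_of_nonpos (by linarith) hRx he0.le
      have := mul_le_mul_of_nonneg_right hker hw
      rw [← hv] at this
      linarith [hk2nn ‖y - x‖ (norm_nonneg _), hk3nn ‖y‖ hyn]
    · rcases le_or_gt ‖y‖ (2*R) with h2 | h2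
      · have hmem : ‖y - x‖ ∈ Iic (3*R) := by
          have := norm_sub_le y x
          rw [← hRdef] at this
          simp only [Set.mem_Iic]
          linarith
        have hv : k2 ‖y - x‖
            = (2:ℝ)^(τ+2) * (1+R) ^ (-τ-2) * ‖y - x‖ ^ (-(n:ℝ)+2) := by
          rw [hk2, Set.indicator_of_mem hmem]
        have hwb : (1+‖y‖) ^ (-τ-2) ≤ ((1+R)/2) ^ (-τ-2) :=
          Real.rpow_le_rpow_of_nonpos (by linarith) (by linarith) (by linarith)
        have hsplit : ((1+R)/2) ^ (-τ-2) = (2:ℝ)^(τ+2) * (1+R) ^ (-τ-2) := by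
          rw [Real.div_rpow (by linarith) (by norm_num), div_eq_mul_inv,
            ← Real.rpow_neg (by norm_num : (0:ℝ) ≤ 2), show -(-τ-2) = τ+2 by ring,
            mul_comm]
        have hkernn : (0:ℝ) ≤ ‖x - y‖ ^ (-(n:ℝ)+2) := rpow_nonneg (norm_nonneg _) _
        have hF : ‖x - y‖ ^ (-(n:ℝ)+2) * (1+‖y‖) ^ (-τ-2)
            ≤ ‖x - y‖ ^ (-(n:ℝ)+2) * ((2:ℝ)^(τ+2) * (1+R) ^ (-τ-2)) := by
          rw [← hsplit]
          exact mul_le_mul_of_nonneg_left hwb hkernn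
        have : ‖x - y‖ ^ (-(n:ℝ)+2) * ((2:ℝ)^(τ+2) * (1+R) ^ (-τ-2)) = k2 ‖y - x‖ := by
          rw [hv, norm_sub_rev y x]; ring
        rw [this] at hF
        linarith [hk1nn ‖y‖ hyn, hk3nn ‖y‖ hyn]
      · have hmem : ‖y‖ ∈ Ioi (2*R) := h2
        have hv : k3 ‖y‖ = (4:ℝ)^((n:ℝ)-2) * (1+‖y‖) ^ ((-(n:ℝ)+2)-τ-2) := by
          rw [hk3, Set.indicator_of_mem hmem]
        have hy1 : (1:ℝ) ≤ ‖y‖ := by linarith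
        have hxy : (1+‖y‖)/4 ≤ ‖x - y‖ := by
          rw [norm_sub_rev x y]
          have := norm_sub_norm_le y x
          rw [← hRdef] at this
          linarith
        have hker : ‖x - y‖ ^ (-(n:ℝ)+2) ≤ ((1+‖y‖)/4) ^ (-(n:ℝ)+2) :=
          Real.rpow_le_rpow_of_nonpos (by linarith) hxy he0.le
        have hsplit : ((1+‖y‖)/4) ^ (-(n:ℝ)+2)
            = (4:ℝ)^((n:ℝ)-2) * (1+‖y‖) ^ (-(n:ℝ)+2) := by
          rw [Real.div_rpow (by linarith) (by norm_num), div_eq_mul_inv,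
            ← Real.rpow_neg (by norm_num : (0:ℝ) ≤ 4), show -(-(n:ℝ)+2) = (n:ℝ)-2 by ring,
            mul_comm]
        have hF : ‖x - y‖ ^ (-(n:ℝ)+2) * (1+‖y‖) ^ (-τ-2)
            ≤ (4:ℝ)^((n:ℝ)-2) * (1+‖y‖) ^ (-(n:ℝ)+2) * (1+‖y‖) ^ (-τ-2) := by
          rw [← hsplit]
          exact mul_le_mul_of_nonneg_right hker hw
        have heq2 : (4:ℝ)^((n:ℝ)-2) * (1+‖y‖) ^ (-(n:ℝ)+2) * (1+‖y‖) ^ (-τ-2) = k3 ‖y‖ := by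
          rw [hv, mul_assoc, ← Real.rpow_add h1y,
            show (-(n:ℝ)+2) + (-τ-2) = (-(n:ℝ)+2)-τ-2 by ring]
        rw [heq2] at hF
        linarith [hk1nn ‖y‖ hyn, hk2nn ‖y - x‖ (norm_nonneg _)]
  -- piece estimates
  have hp1 : (∫ y : EuclideanSpace ℝ (Fin n), k1 ‖y‖)
      ≤ (n:ℝ)*c*((4:ℝ)^((n:ℝ)-2)/((n:ℝ)-2-τ)) * (1+R) ^ (-τ) := by
    rw [radial (by omega) k1, hk1, radial_Iic]
    simp_rw [show ∀ r : ℝ, r ^ (n-1) * ((R/2) ^ (-(n:ℝ)+2) * (1+r) ^ (-τ-2))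
        = (R/2) ^ (-(n:ℝ)+2) * (r ^ (n-1) * (1+r) ^ (-τ-2)) from fun r => by ring,
      integral_const_mul]
    have hstep : (R/2) ^ (-(n:ℝ)+2)
        * ∫ r in Ioc (0:ℝ) (R/2), r ^ (n-1) * (1+r) ^ (-τ-2)
        ≤ ((1+R)/4) ^ (-(n:ℝ)+2) * ((1+R) ^ ((n:ℝ)-2-τ)/((n:ℝ)-2-τ)) := by
      have hint_nonneg : (0:ℝ) ≤ ∫ r in Ioc (0:ℝ) (R/2), r ^ (n-1) * (1+r) ^ (-τ-2) := by
        refine setIntegral_nonneg measurableSet_Ioc fun r hr => ?_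
        have : (0:ℝ) < r := hr.1
        positivity
      have hbase : ((1:ℝ)+R)/4 ≤ R/2 := by linarith
      have hker : (R/2) ^ (-(n:ℝ)+2) ≤ ((1+R)/4) ^ (-(n:ℝ)+2) :=
        Real.rpow_le_rpow_of_nonpos (by linarith) hbase he0.le
      have hone : (∫ r in Ioc (0:ℝ) (R/2), r ^ (n-1) * (1+r) ^ (-τ-2))
          ≤ (1+R) ^ ((n:ℝ)-2-τ)/((n:ℝ)-2-τ) := by
        refine (oneD1 hn hτ hτn (by linarith : (0:ℝ) ≤ R/2)).trans ?_
        gcongr <;> linarith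
      exact mul_le_mul hker hone hint_nonneg (rpow_nonneg (by linarith) _)
    refine (mul_le_mul_of_nonneg_left hstep hnc0).trans (le_of_eq ?_)
    have hsplit : ((1+R)/4) ^ (-(n:ℝ)+2) = (4:ℝ)^((n:ℝ)-2) * (1+R) ^ (-(n:ℝ)+2) := by
      rw [Real.div_rpow (by linarith) (by norm_num), div_eq_mul_inv,
        ← Real.rpow_neg (by norm_num : (0:ℝ) ≤ 4), show -(-(n:ℝ)+2) = (n:ℝ)-2 by ring,
        mul_comm]
    rw [hsplit]
    rw [show (4:ℝ)^((n:ℝ)-2) * (1+R) ^ (-(n:ℝ)+2) * ((1+R) ^ ((n:ℝ)-2-τ)/((n:ℝ)-2-τ))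
        = (4:ℝ)^((n:ℝ)-2)/((n:ℝ)-2-τ) * ((1+R) ^ (-(n:ℝ)+2) * (1+R) ^ ((n:ℝ)-2-τ)) from by
      ring]
    rw [← Real.rpow_add h1R, show (-(n:ℝ)+2) + ((n:ℝ)-2-τ) = -τ by ring]
    ring
  have hp2 : (∫ y : EuclideanSpace ℝ (Fin n), k2 ‖y - x‖)
      ≤ (n:ℝ)*c*((2:ℝ)^(τ+2)*(9/2)) * (1+R) ^ (-τ) := by
    rw [integral_sub_right_eq_self (fun z : EuclideanSpace ℝ (Fin n) => k2 ‖z‖) x]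
    rw [radial (by omega) k2, hk2, radial_Iic]
    simp_rw [show ∀ r : ℝ, r ^ (n-1) * ((2:ℝ)^(τ+2) * (1+R) ^ (-τ-2) * r ^ (-(n:ℝ)+2))
        = (2:ℝ)^(τ+2) * (1+R) ^ (-τ-2) * (r ^ (n-1) * r ^ (-(n:ℝ)+2)) from fun r => by ring,
      integral_const_mul]
    rw [oneD2 hn (by linarith : (0:ℝ) ≤ 3*R)]
    have hkey : (2:ℝ)^(τ+2) * (1+R) ^ (-τ-2) * ((3*R)^2/2)
        ≤ (2:ℝ)^(τ+2)*(9/2) * ((1+R) ^ (-τ-2) * (1+R)^(2:ℕ)) := by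
      have h1 : ((3*R:ℝ))^2 ≤ (3*(1+R))^2 := by nlinarith
      have h2 : (0:ℝ) ≤ (2:ℝ)^(τ+2) * (1+R) ^ (-τ-2) :=
        mul_nonneg (rpow_nonneg (by norm_num) _) (rpow_nonneg (by linarith) _)
      calc (2:ℝ)^(τ+2) * (1+R) ^ (-τ-2) * ((3*R)^2/2)
          ≤ (2:ℝ)^(τ+2) * (1+R) ^ (-τ-2) * ((3*(1+R))^2/2) := by
            refine mul_le_mul_of_nonneg_left ?_ h2
            linarith
        _ = (2:ℝ)^(τ+2)*(9/2) * ((1+R) ^ (-τ-2) * (1+R)^(2:ℕ)) := by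
            ring
    refine (mul_le_mul_of_nonneg_left hkey hnc0).trans (le_of_eq ?_)
    rw [← Real.rpow_natCast (1+R) 2, ← Real.rpow_add h1R,
      show (-τ-2) + ((2:ℕ):ℝ) = -τ by push_cast; ring]
    ring
  have hp3 : (∫ y : EuclideanSpace ℝ (Fin n), k3 ‖y‖)
      ≤ (n:ℝ)*c*((4:ℝ)^((n:ℝ)-2)/τ) * (1+R) ^ (-τ) := by
    rw [radial (by omega) k3, hk3, radial_Ioi _ (by linarith : (0:ℝ) ≤ 2*R)]
    simp_rw [show ∀ r : ℝ, r ^ (n-1) * ((4:ℝ)^((n:ℝ)-2) * (1+r) ^ ((-(n:ℝ)+2)-τ-2))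
        = (4:ℝ)^((n:ℝ)-2) * (r ^ (n-1) * (1+r) ^ ((-(n:ℝ)+2)-τ-2)) from fun r => by ring,
      integral_const_mul]
    have h4 : (0:ℝ) ≤ (4:ℝ)^((n:ℝ)-2) := rpow_nonneg (by norm_num) _
    have hone := oneD3 hn hτ (show (0:ℝ) < 2*R by linarith)
    have htail : (2*R:ℝ) ^ (-τ) ≤ (1+R) ^ (-τ) :=
      Real.rpow_le_rpow_of_nonpos h1R (by linarith) (by linarith)
    have hstep : (4:ℝ)^((n:ℝ)-2)
        * ∫ r in Ioi (2*R), r ^ (n-1) * (1+r) ^ ((-(n:ℝ)+2)-τ-2)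
        ≤ (4:ℝ)^((n:ℝ)-2) * ((1+R) ^ (-τ)/τ) := by
      refine mul_le_mul_of_nonneg_left (hone.trans ?_) h4
      gcongr
    refine (mul_le_mul_of_nonneg_left hstep hnc0).trans (le_of_eq ?_)
    ring
  calc (∫ y : EuclideanSpace ℝ (Fin n), ‖x - y‖ ^ (-(n:ℝ)+2) * (1+‖y‖) ^ (-τ-2))
      ≤ ∫ y : EuclideanSpace ℝ (Fin n), (k1 ‖y‖ + k2 ‖y - x‖ + k3 ‖y‖) :=
        integral_mono_of_nonneg
          (ae_of_all _ fun y => mul_nonneg (rpow_nonneg (norm_nonneg _) _)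
            (rpow_nonneg (by positivity) _))
          ((hg1.add hg2).add hg3) (ae_of_all _ hpoint)
    _ = (∫ y : EuclideanSpace ℝ (Fin n), k1 ‖y‖)
          + (∫ y : EuclideanSpace ℝ (Fin n), k2 ‖y - x‖)
          + ∫ y : EuclideanSpace ℝ (Fin n), k3 ‖y‖ := by
        have hg12 : Integrable (fun y : EuclideanSpace ℝ (Fin n) => k1 ‖y‖ + k2 ‖y - x‖) :=
          hg1.add hg2
        rw [integral_add hg12 hg3, integral_add hg1 hg2]
    _ ≤ ((n:ℝ)*c*((4:ℝ)^((n:ℝ)-2)/((n:ℝ)-2-τ)) + (n:ℝ)*c*((2:ℝ)^(τ+2)*(9/2))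
          + (n:ℝ)*c*((4:ℝ)^((n:ℝ)-2)/τ)) * (1+R) ^ (-τ) := by
        rw [add_mul, add_mul]
        exact add_le_add (add_le_add hp1 hp2) hp3

end Stmt9

end

theorem stmt9 (n : ℕ) (hn : 3 ≤ n) (τ : ℝ) (hτ : 0 < τ) (hτn : τ < n - 2) :
    ∃ C > 0, ∀ x : EuclideanSpace ℝ (Fin n), x ≠ 0 →
      (∫ y : EuclideanSpace ℝ (Fin n), ‖x - y‖ ^ (-(n:ℝ) + 2) * (1 + ‖y‖) ^ (-τ - 2))
        ≤ C * (1 + ‖x‖) ^ (-τ) := by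
  obtain ⟨C1, hC1, h1⟩ := Stmt9.small hn hτ hτn
  obtain ⟨C2, hC2, h2⟩ := Stmt9.large hn hτ hτn
  refine ⟨max (max C1 C2) 1, lt_of_lt_of_le zero_lt_one (le_max_right _ _), fun x _ => ?_⟩
  have hpow : (0:ℝ) ≤ (1 + ‖x‖) ^ (-τ) := Real.rpow_nonneg (by positivity) _
  rcases le_total ‖x‖ 1 with h | h
  · exact (h1 x h).trans (mul_le_mul_of_nonneg_right
      ((le_max_left C1 C2).trans (le_max_left _ 1)) hpow)
  · exact (h2 x h).trans (mul_le_mul_of_nonneg_right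
      ((le_max_right C1 C2).trans (le_max_left _ 1)) hpow)
end

section
/- Let B : [s, ∞) → V be C¹ into a normed space, suppose B(t) → 0 as t → ∞, and suppose ‖B'(t')‖ ≤ a(t')‖B(t')‖ + b(t') with a, b ≥ 0 integrable on [s,∞) and A := ∫_s^∞ a < ∞. Then ‖B(s)‖ ≤ e^{A} ∫_s^∞ b(t') dt'. -/
open Real MeasureTheory Set
set_option maxHeartbeats 1000000

lemma gronwall_cont (s T : ℝ) (hsT : s ≤ T) (c ψ : ℝ → ℝ) (hc : Continuous c)
    (hψ : Continuous ψ) (hcn : ∀ t, 0 ≤ c t) (C : ℝ)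
    (hub : ∀ t ∈ Icc s T, ψ t ≤ C + ∫ τ in t..T, c τ * ψ τ) :
    ψ s ≤ C * Real.exp (∫ τ in s..T, c τ) := by
  set g : ℝ → ℝ := fun t => C + ∫ τ in t..T, c τ * ψ τ with hg
  set E : ℝ → ℝ := fun t => Real.exp (∫ τ in s..t, c τ) with hE
  have hcψ : Continuous fun τ => c τ * ψ τ := hc.mul hψ
  have hgd : ∀ t, HasDerivAt g (-(c t * ψ t)) t := by
    intro t
    have h1 : ∀ u, g u = (C + ∫ τ in s..T, c τ * ψ τ) - ∫ τ in s..u, c τ * ψ τ := by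
      intro u
      have := intervalIntegral.integral_add_adjacent_intervals
        (hcψ.intervalIntegrable (μ := volume) s u) (hcψ.intervalIntegrable (μ := volume) u T)
      simp only [hg]
      linarith [this]
    have h2 : HasDerivAt (fun u => (C + ∫ τ in s..T, c τ * ψ τ) - ∫ τ in s..u, c τ * ψ τ)
        (-(c t * ψ t)) t := by
      simpa using ((hcψ.integral_hasStrictDerivAt s t).hasDerivAt).const_sub
        (C + ∫ τ in s..T, c τ * ψ τ)
    have h1' : g = fun u => (C + ∫ τ in s..T, c τ * ψ τ) - ∫ τ in s..u, c τ * ψ τ :=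
      funext h1
    rw [h1']; exact h2
  have hEd : ∀ t, HasDerivAt E (E t * c t) t := by
    intro t
    exact ((hc.integral_hasStrictDerivAt s t).hasDerivAt).exp
  have hFd : ∀ t, HasDerivAt (fun t => g t * E t)
      (-(c t * ψ t) * E t + g t * (E t * c t)) t := fun t => (hgd t).mul (hEd t)
  have hmono : MonotoneOn (fun t => g t * E t) (Icc s T) := by
    apply monotoneOn_of_deriv_nonneg (convex_Icc s T)
    · exact (continuous_iff_continuousAt.2 fun t => (hFd t).continuousAt).continuousOn
    · intro t ht
      exact (hFd t).differentiableAt.differentiableWithinAt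
    · intro t ht
      rw [interior_Icc] at ht
      rw [(hFd t).deriv]
      have hψg : ψ t ≤ g t := hub t (Ioo_subset_Icc_self ht)
      have hE0 : 0 < E t := Real.exp_pos _
      nlinarith [hcn t, mul_nonneg (hcn t) (sub_nonneg.2 hψg)]
  have hst : g s * E s ≤ g T * E T := hmono ⟨le_refl s, hsT⟩ ⟨hsT, le_refl T⟩ hsT
  have hEs : E s = 1 := by simp [hE]
  have hgT : g T = C := by simp [hg]
  have := hub s ⟨le_refl s, hsT⟩
  rw [hEs, hgT, mul_one] at hst
  calc ψ s ≤ g s := this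
    _ ≤ C * E T := hst

theorem stmt18_aux {V : Type*} [NormedAddCommGroup V] [NormedSpace ℝ V] [CompleteSpace V]
    (s : ℝ) (B : ℝ → V) (B' : ℝ → V) (a b : ℝ → ℝ)
    (hderiv : ∀ t ∈ Set.Ici s, HasDerivAt B (B' t) t)
    (hlim : Filter.Tendsto B Filter.atTop (nhds 0))
    (han : ∀ t ∈ Set.Ici s, 0 ≤ a t) (hbn : ∀ t ∈ Set.Ici s, 0 ≤ b t)
    (hai : IntegrableOn a (Set.Ici s))
    (hbi : IntegrableOn b (Set.Ici s))
    (hineq : ∀ t ∈ Set.Ici s, ‖B' t‖ ≤ a t * ‖B t‖ + b t) :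
    ‖B s‖ ≤ Real.exp (∫ t in Set.Ici s, a t) * ∫ t in Set.Ici s, b t := by
  have hBc : ContinuousOn B (Ici s) := fun t ht => ((hderiv t ht).continuousAt).continuousWithinAt
  have key : ∀ T, s ≤ T →
      ‖B s‖ ≤ (‖B T‖ + ∫ t in s..T, b t) * Real.exp (∫ t in s..T, a t) := by
    intro T hsT
    have hIcc : Icc s T ⊆ Ici s := fun x hx => hx.1
    have haI : IntegrableOn a (Icc s T) := hai.mono_set hIcc
    have hbI : IntegrableOn b (Icc s T) := hbi.mono_set hIcc
    obtain ⟨M, hM⟩ := (isCompact_Icc : IsCompact (Icc s T)).exists_bound_of_continuousOn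
      ((hBc.mono hIcc).norm)
    have hM0 : 0 ≤ M := le_trans (norm_nonneg _) (by simpa using hM s ⟨le_refl s, hsT⟩)
    have hMB : ∀ x ∈ Icc s T, ‖B x‖ ≤ M := fun x hx => by simpa using hM x hx
    obtain ⟨u, hu, hu_def⟩ : ∃ u : ℝ → ℝ, Continuous u ∧ ∀ τ, u τ = ‖B (max τ s)‖ := by
      refine ⟨fun τ => ‖B (max τ s)‖, ?_, fun _ => rfl⟩
      have : Continuous fun τ => B (max τ s) :=
        hBc.comp_continuous (continuous_id.max continuous_const) (fun x => mem_Ici.2 (le_max_right _ _))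
      exact this.norm
    have hueq : ∀ t ∈ Icc s T, u t = ‖B t‖ := fun t ht => by
      rw [hu_def, max_eq_left ht.1]
    have huM : ∀ t ∈ Icc s T, u t ≤ M := fun t ht => (hueq t ht) ▸ hMB t ht
    have hun : ∀ t, 0 ≤ u t := fun t => (hu_def t) ▸ norm_nonneg _
    have hmeasB' : AEStronglyMeasurable B' (volume.restrict (Icc s T)) := by
      have h1 : AEStronglyMeasurable (deriv B) (volume.restrict (Icc s T)) :=
        aestronglyMeasurable_deriv B _
      refine h1.congr ?_
      filter_upwards [ae_restrict_mem measurableSet_Icc] with τ hτ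
      exact (hderiv τ (hIcc hτ)).deriv
    have hB'int : IntegrableOn B' (Icc s T) := by
      refine Integrable.mono' ((haI.mul_const M).add hbI) hmeasB' ?_
      filter_upwards [ae_restrict_mem measurableSet_Icc] with τ hτ
      calc ‖B' τ‖ ≤ a τ * ‖B τ‖ + b τ := hineq τ (hIcc hτ)
        _ ≤ a τ * M + b τ := by
            have := mul_le_mul_of_nonneg_left (hMB τ hτ) (han τ (hIcc hτ))
            linarith
    have hauI : IntegrableOn (fun τ => a τ * u τ) (Icc s T) := by
      refine Integrable.mono' (haI.mul_const M) ?_ ?_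
      · exact (haI.aestronglyMeasurable.mul hu.aestronglyMeasurable.restrict)
      · filter_upwards [ae_restrict_mem measurableSet_Icc] with τ hτ
        have h1 : 0 ≤ a τ := han τ (hIcc hτ)
        rw [Real.norm_eq_abs, abs_of_nonneg (mul_nonneg h1 (hun τ))]
        exact mul_le_mul_of_nonneg_left (huM τ hτ) h1
    have hbnn : (0:ℝ) ≤ ∫ τ in s..T, b τ :=
      intervalIntegral.integral_nonneg hsT (fun τ hτ => hbn τ hτ.1)
    set C : ℝ := ‖B T‖ + ∫ τ in s..T, b τ with hC_def
    have hC0 : 0 ≤ C := add_nonneg (norm_nonneg _) hbnn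
    have base : ∀ t ∈ Icc s T, ‖B t‖ ≤ C + ∫ τ in t..T, a τ * u τ := by
      intro t ht
      have htT : t ≤ T := ht.2
      have hsub : Icc t T ⊆ Icc s T := Icc_subset_Icc ht.1 le_rfl
      have hB'ii : IntervalIntegrable B' volume t T :=
        (intervalIntegrable_iff_integrableOn_Icc_of_le htT).2 (hB'int.mono_set hsub)
      have hftc : ∫ τ in t..T, B' τ = B T - B t := by
        refine intervalIntegral.integral_eq_sub_of_hasDerivAt ?_ hB'ii
        intro x hx
        rw [uIcc_of_le htT] at hx
        exact hderiv x (hIcc (hsub hx))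
      have h1 : ‖B t‖ ≤ ‖B T‖ + ‖∫ τ in t..T, B' τ‖ := by
        rw [hftc]
        calc ‖B t‖ = ‖B T - (B T - B t)‖ := by rw [sub_sub_cancel]
          _ ≤ ‖B T‖ + ‖B T - B t‖ := norm_sub_le _ _
      have h2 : ‖∫ τ in t..T, B' τ‖ ≤ ∫ τ in t..T, ‖B' τ‖ :=
        intervalIntegral.norm_integral_le_integral_norm htT
      have h3 : ∫ τ in t..T, ‖B' τ‖ ≤ ∫ τ in t..T, (a τ * u τ + b τ) := by
        refine intervalIntegral.integral_mono_on htT (hB'ii.norm) ?_ ?_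
        · have hsum : IntegrableOn (fun τ => a τ * u τ + b τ) (Icc s T) := hauI.add hbI
          exact (intervalIntegrable_iff_integrableOn_Icc_of_le htT).2 (hsum.mono_set hsub)
        · intro x hx
          have := hineq x (hIcc (hsub hx))
          rw [hueq x (hsub hx)]
          exact this
      have h4 : ∫ τ in t..T, (a τ * u τ + b τ) =
          (∫ τ in t..T, a τ * u τ) + ∫ τ in t..T, b τ :=
        intervalIntegral.integral_add
          ((intervalIntegrable_iff_integrableOn_Icc_of_le htT).2 (hauI.mono_set hsub))
          ((intervalIntegrable_iff_integrableOn_Icc_of_le htT).2 (hbI.mono_set hsub))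
      have h5 : ∫ τ in t..T, b τ ≤ ∫ τ in s..T, b τ := by
        have hsplit : (∫ τ in s..t, b τ) + ∫ τ in t..T, b τ = ∫ τ in s..T, b τ :=
          intervalIntegral.integral_add_adjacent_intervals
            ((intervalIntegrable_iff_integrableOn_Icc_of_le ht.1).2
              (hbI.mono_set (Icc_subset_Icc le_rfl htT)))
            ((intervalIntegrable_iff_integrableOn_Icc_of_le htT).2 (hbI.mono_set hsub))
        have : (0:ℝ) ≤ ∫ τ in s..t, b τ :=
          intervalIntegral.integral_nonneg ht.1 (fun τ hτ => hbn τ hτ.1)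
        linarith
      rw [hC_def]
      linarith
    have epsbound : ∀ ε : ℝ, 0 < ε →
        ‖B s‖ ≤ (C + M * ε) * Real.exp ((∫ τ in s..T, a τ) + ε) := by
      intro ε hε
      have hfint : Integrable ((Icc s T).indicator a) :=
        (integrable_indicator_iff measurableSet_Icc).2 haI
      obtain ⟨g, -, gclose, gcont, gint⟩ := hfint.exists_hasCompactSupport_integral_sub_le hε
      obtain ⟨c, hccont, hcn, hcbound⟩ : ∃ c : ℝ → ℝ, Continuous c ∧ (∀ x, 0 ≤ c x) ∧
          ∀ x, 0 ≤ a x → |a x - c x| ≤ |a x - g x| := by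
        refine ⟨fun x => max (g x) 0, gcont.max continuous_const,
          fun x => le_max_right _ _, fun x h0 => ?_⟩
        rcases le_or_gt (g x) 0 with h | h
        · simp only [max_eq_right h]
          rw [abs_of_nonneg (by linarith : (0:ℝ) ≤ a x - 0),
            abs_of_nonneg (by linarith : (0:ℝ) ≤ a x - g x)]
          linarith
        · simp only [max_eq_left h.le]
          exact le_rfl
      have hcI : IntegrableOn c (Icc s T) := hccont.integrableOn_Icc
      have hdiffI : IntegrableOn (fun x => |a x - c x|) (Icc s T) := (haI.sub hcI).abs
      have hclose2 : ∫ x in Icc s T, |a x - c x| ≤ ε := by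
        have hle : ∀ x ∈ Icc s T, |a x - c x| ≤ ‖(Icc s T).indicator a x - g x‖ := by
          intro x hx
          rw [indicator_of_mem hx, Real.norm_eq_abs]
          exact hcbound x (han x (hIcc hx))
        calc ∫ x in Icc s T, |a x - c x|
            ≤ ∫ x in Icc s T, ‖(Icc s T).indicator a x - g x‖ :=
              setIntegral_mono_on hdiffI ((hfint.sub gint).norm.integrableOn)
                measurableSet_Icc hle
          _ ≤ ∫ x, ‖(Icc s T).indicator a x - g x‖ :=
              setIntegral_le_integral (hfint.sub gint).norm
                (by filter_upwards with x using norm_nonneg _)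
          _ ≤ ε := gclose
      have hdM : IntegrableOn (fun τ => |a τ - c τ| * M) (Icc s T) := hdiffI.mul_const M
      have hub : ∀ t ∈ Icc s T, u t ≤ (C + M * ε) + ∫ τ in t..T, c τ * u τ := by
        intro t ht
        have htT : t ≤ T := ht.2
        have hsub : Icc t T ⊆ Icc s T := Icc_subset_Icc ht.1 le_rfl
        have hcuI : IntervalIntegrable (fun τ => c τ * u τ) volume t T :=
          (hccont.mul hu).intervalIntegrable t T
        have hauII : IntervalIntegrable (fun τ => a τ * u τ) volume t T :=
          (intervalIntegrable_iff_integrableOn_Icc_of_le htT).2 (hauI.mono_set hsub)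
        have hdII : ∀ t' ∈ Icc s T, IntervalIntegrable (fun τ => |a τ - c τ| * M) volume t' T := by
          intro t' ht'
          exact (intervalIntegrable_iff_integrableOn_Icc_of_le ht'.2).2
            (hdM.mono_set (Icc_subset_Icc ht'.1 le_rfl))
        have step : ∫ τ in t..T, a τ * u τ ≤ (∫ τ in t..T, c τ * u τ) + M * ε := by
          have hmono : ∫ τ in t..T, a τ * u τ
              ≤ ∫ τ in t..T, (c τ * u τ + |a τ - c τ| * M) := by
            refine intervalIntegral.integral_mono_on htT hauII (hcuI.add (hdII t ht)) ?_
            intro x hx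
            have h2 : (a x - c x) * u x ≤ |a x - c x| * u x :=
              mul_le_mul_of_nonneg_right (le_abs_self _) (hun x)
            have h3 : |a x - c x| * u x ≤ |a x - c x| * M :=
              mul_le_mul_of_nonneg_left (huM x (hsub hx)) (abs_nonneg _)
            nlinarith [hun x]
          have hsplit : ∫ τ in t..T, (c τ * u τ + |a τ - c τ| * M)
              = (∫ τ in t..T, c τ * u τ) + ∫ τ in t..T, |a τ - c τ| * M :=
            intervalIntegral.integral_add hcuI (hdII t ht)
          have hrest : ∫ τ in t..T, |a τ - c τ| * M ≤ M * ε := by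
            have hadj : (∫ τ in s..t, |a τ - c τ| * M) + ∫ τ in t..T, |a τ - c τ| * M
                = ∫ τ in s..T, |a τ - c τ| * M :=
              intervalIntegral.integral_add_adjacent_intervals
                ((intervalIntegrable_iff_integrableOn_Icc_of_le ht.1).2
                  (hdM.mono_set (Icc_subset_Icc le_rfl htT)))
                (hdII t ht)
            have hnn : (0:ℝ) ≤ ∫ τ in s..t, |a τ - c τ| * M :=
              intervalIntegral.integral_nonneg ht.1
                (fun τ _ => mul_nonneg (abs_nonneg _) hM0)
            have heq : ∫ τ in s..T, |a τ - c τ| * M = (∫ x in Icc s T, |a x - c x|) * M := by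
              rw [intervalIntegral.integral_mul_const, intervalIntegral.integral_of_le hsT,
                ← integral_Icc_eq_integral_Ioc]
            have : ∫ τ in s..T, |a τ - c τ| * M ≤ ε * M := by
              rw [heq]
              exact mul_le_mul_of_nonneg_right hclose2 hM0
            nlinarith
          linarith
        have hb := base t ht
        rw [← hueq t ht] at hb
        linarith
      have hmain := gronwall_cont s T hsT c u hccont hu hcn (C + M * ε) hub
      have hus : u s = ‖B s‖ := hueq s ⟨le_rfl, hsT⟩
      have hcexp : ∫ τ in s..T, c τ ≤ (∫ τ in s..T, a τ) + ε := by
        have haII : IntervalIntegrable a volume s T :=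
          (intervalIntegrable_iff_integrableOn_Icc_of_le hsT).2 haI
        have hdII2 : IntervalIntegrable (fun τ => |a τ - c τ|) volume s T :=
          (intervalIntegrable_iff_integrableOn_Icc_of_le hsT).2 hdiffI
        have h1 : ∫ τ in s..T, c τ ≤ ∫ τ in s..T, (a τ + |a τ - c τ|) := by
          refine intervalIntegral.integral_mono_on hsT (hccont.intervalIntegrable s T)
            (haII.add hdII2) ?_
          intro x _
          have := le_abs_self (c x - a x)
          have habs : |c x - a x| = |a x - c x| := abs_sub_comm _ _
          linarith
        have h2 : ∫ τ in s..T, (a τ + |a τ - c τ|)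
            = (∫ τ in s..T, a τ) + ∫ τ in s..T, |a τ - c τ| :=
          intervalIntegral.integral_add haII hdII2
        have h3 : ∫ τ in s..T, |a τ - c τ| ≤ ε := by
          rw [intervalIntegral.integral_of_le hsT, ← integral_Icc_eq_integral_Ioc]
          exact hclose2
        linarith
      have hCM : 0 ≤ C + M * ε := add_nonneg hC0 (mul_nonneg hM0 hε.le)
      calc ‖B s‖ = u s := hus.symm
        _ ≤ (C + M * ε) * Real.exp (∫ τ in s..T, c τ) := hmain
        _ ≤ (C + M * ε) * Real.exp ((∫ τ in s..T, a τ) + ε) :=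
            mul_le_mul_of_nonneg_left (Real.exp_le_exp.2 hcexp) hCM
    have hlim2 : Filter.Tendsto
        (fun ε : ℝ => (C + M * ε) * Real.exp ((∫ τ in s..T, a τ) + ε))
        (nhdsWithin 0 (Ioi 0)) (nhds (C * Real.exp (∫ τ in s..T, a τ))) := by
      have hcont : Continuous fun ε : ℝ =>
          (C + M * ε) * Real.exp ((∫ τ in s..T, a τ) + ε) :=
        (continuous_const.add (continuous_const.mul continuous_id)).mul
          (Real.continuous_exp.comp (continuous_const.add continuous_id))
      have h0 := hcont.tendsto 0
      simp only [mul_zero, add_zero] at h0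
      exact h0.mono_left nhdsWithin_le_nhds
    refine ge_of_tendsto hlim2 ?_
    filter_upwards [self_mem_nhdsWithin] with ε hε using epsbound ε hε
  have h1 : Filter.Tendsto (fun T => (‖B T‖ + ∫ t in s..T, b t) * Real.exp (∫ t in s..T, a t))
      Filter.atTop (nhds ((0 + ∫ t in Ioi s, b t) * Real.exp (∫ t in Ioi s, a t))) := by
    apply Filter.Tendsto.mul
    · exact (by simpa using hlim.norm : Filter.Tendsto (fun T => ‖B T‖) Filter.atTop (nhds 0)).add
        (intervalIntegral_tendsto_integral_Ioi s (hbi.mono_set Ioi_subset_Ici_self) Filter.tendsto_id)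
    · exact (Real.continuous_exp.continuousAt.tendsto).comp
        (intervalIntegral_tendsto_integral_Ioi s (hai.mono_set Ioi_subset_Ici_self) Filter.tendsto_id)
  have h2 : ‖B s‖ ≤ (0 + ∫ t in Ioi s, b t) * Real.exp (∫ t in Ioi s, a t) := by
    refine ge_of_tendsto h1 ?_
    filter_upwards [Filter.eventually_ge_atTop s] with T hT using key T hT
  rw [MeasureTheory.integral_Ici_eq_integral_Ioi, MeasureTheory.integral_Ici_eq_integral_Ioi]
  rw [zero_add] at h2
  linarith [h2, mul_comm (∫ t in Ioi s, b t) (Real.exp (∫ t in Ioi s, a t))]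

theorem stmt18 {V : Type*} [NormedAddCommGroup V] [NormedSpace ℝ V]
    (s : ℝ) (B : ℝ → V) (B' : ℝ → V) (a b : ℝ → ℝ)
    (hderiv : ∀ t ∈ Set.Ici s, HasDerivAt B (B' t) t)
    (hlim : Filter.Tendsto B Filter.atTop (nhds 0))
    (han : ∀ t ∈ Set.Ici s, 0 ≤ a t) (hbn : ∀ t ∈ Set.Ici s, 0 ≤ b t)
    (hai : IntegrableOn a (Set.Ici s))
    (hbi : IntegrableOn b (Set.Ici s))
    (hineq : ∀ t ∈ Set.Ici s, ‖B' t‖ ≤ a t * ‖B t‖ + b t) :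
    ‖B s‖ ≤ Real.exp (∫ t in Set.Ici s, a t) * ∫ t in Set.Ici s, b t := by
  set L : V →L[ℝ] UniformSpace.Completion V := UniformSpace.Completion.toComplL
  have hLnorm : ∀ x : V, ‖L x‖ = ‖x‖ := fun x => UniformSpace.Completion.norm_coe x
  have h := stmt18_aux s (fun t => L (B t)) (fun t => L (B' t)) a b
    (fun t ht => L.hasFDerivAt.comp_hasDerivAt t (hderiv t ht))
    (by
      have : Filter.Tendsto L (nhds 0) (nhds (L 0)) := L.continuous.continuousAt
      rw [map_zero] at this
      exact this.comp hlim)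
    han hbn hai hbi
    (fun t ht => by rw [hLnorm, hLnorm]; exact hineq t ht)
  rw [hLnorm] at h
  exact h
end
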